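/- arXiv:2603.14812 — 9 statements merged into one kernel-verified Lean document; each statement's English description precedes it below -/
import Mathlib

section
/- For all reals R > 0, Rs > 0 and F > 0, the value ηopt(R,Rs,F) lies in [0,1] and simultaneously minimizes both the upload latency and the required storage over the data-scheduling variable: for every η ∈ [0,1], T(R,Rs,F,ηopt(R,Rs,F)) ≤ T(R,Rs,F,η) and V(R,Rs,F,ηopt(R,Rs,F)) ≤ V(R,Rs,F,η); moreover T(R,Rs,F,ηopt(R,Rs,F)) = Topt(R,Rs,F) and V(R,Rs,F,ηopt(R,Rs,F)) = Vopt(R,Rs,F). -/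
noncomputable section

/-- Upload latency `T(R,Rs,F,η)`, defined piecewise (cases (i)-(v)). -/
def Tlat (D ρ ζ R Rs F η : ℝ) : ℝ :=
  if F / ρ ≤ η * R then
    if Rs ≤ ζ * F / ρ + (1 - η) * R then
      if η * Rs / (ζ * η + 1 - η) ≤ F / ρ then
        D * (ζ * η + 1 - η) / Rs            -- case (i)
      else
        η * D * ρ / F                        -- case (ii)
    else
      η * D * ρ / F                          -- case (iii)
  else
    if Rs ≤ (ζ * η + 1 - η) * R then
      D * (ζ * η + 1 - η) / Rs               -- case (iv)
    else
      D / R                                  -- case (v)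

/-- Required storage `V(R,Rs,F,η)`, defined piecewise (cases (i)-(v)). -/
def Vsto (D ρ ζ R Rs F η : ℝ) : ℝ :=
  if F / ρ ≤ η * R then
    if Rs ≤ ζ * F / ρ + (1 - η) * R then
      D * (R - Rs - (1 - ζ) * F / ρ) / R     -- cases (i),(ii)
    else
      D * (η * R - F / ρ) / R                -- case (iii)
  else
    if Rs ≤ (ζ * η + 1 - η) * R then
      D * ((ζ * η + 1 - η) * R - Rs) / R     -- case (iv)
    else
      0                                      -- case (v)

/-- Optimal data-scheduling variable `ηopt(R,Rs,F)`, defined by cases (1)-(6). -/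
def etaOpt (ρ ζ R Rs F : ℝ) : ℝ :=
  if R < Rs then 0
  else if R < Rs / ζ then
    if F / ρ < (R - Rs) / (1 - ζ) then F / (F * (1 - ζ) + ρ * Rs)
    else (R - Rs) / ((1 - ζ) * R)
  else
    if F / ρ < Rs / ζ then F / (F * (1 - ζ) + ρ * Rs)
    else 1

/-- Optimized latency `Topt(R,Rs,F)`, defined by cases (1)-(6). -/
def Topt (D ρ ζ R Rs F : ℝ) : ℝ :=
  if R < Rs then D / R
  else if R < Rs / ζ then
    if F / ρ < (R - Rs) / (1 - ζ) then D * ρ / (F * (1 - ζ) + ρ * Rs)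
    else D / R
  else
    if F / ρ < Rs / ζ then D * ρ / (F * (1 - ζ) + ρ * Rs)
    else ζ * D / Rs

/-- Optimized storage `Vopt(R,Rs,F)`, defined by cases (1)-(6). -/
def Vopt (D ρ ζ R Rs F : ℝ) : ℝ :=
  if R < Rs then 0
  else if R < Rs / ζ then
    if F / ρ < (R - Rs) / (1 - ζ) then D * (R - Rs - (1 - ζ) * F / ρ) / R
    else 0
  else
    if F / ρ < Rs / ζ then D * (R - Rs - (1 - ζ) * F / ρ) / R
    else if F / ρ < R then D * (R - Rs - (1 - ζ) * F / ρ) / R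
    else D * (ζ * R - Rs) / R

/-!
Both piecewise formulas are maxima in disguise. The latency is the time of the slowest of the three
pipeline stages, `T = D · max (1/R, ηρ/F, (ζη+1-η)/Rs)` (upload, computing, downlink), and the
storage is the largest backlog,
`V = D · max (0, ηR - F/ρ, (ζη+1-η)R - Rs, R - Rs - (1-ζ)F/ρ) / R`.
Every value of `Topt` is then a lower bound for `T` on all of `[0,1]`: `D/R` trivially, `ζD/Rs`
because `ζη+1-η ≥ ζ`, and `Dρ/(F(1-ζ)+ρRs)` because the weights `F(1-ζ)` and `ρRs` average the
computing and downlink times to exactly `Dρ/(F(1-ζ)+ρRs)`. Likewise every value of `Vopt` bounds `V`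
from below. It remains to check, case by case, that `ηopt` attains these bounds.
-/

theorem le_mul_add_one_sub {α : Type*} [CommRing α] [LinearOrder α] [IsStrictOrderedRing α]
    {ζ η : α} (hζ : ζ ≤ 1) (hη : η ≤ 1) : ζ ≤ ζ * η + 1 - η := by
  nlinarith [mul_nonneg (sub_nonneg.2 hζ) (sub_nonneg.2 hη)]

theorem mul_add_mul_div_add_le_max {α : Type*} [Field α] [LinearOrder α] [IsStrictOrderedRing α]
    {a b x y : α} (ha : 0 ≤ a) (hb : 0 ≤ b) (hab : 0 < a + b) :
    (a * x + b * y) / (a + b) ≤ max x y := by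
  rw [div_le_iff₀ hab]
  nlinarith [mul_le_mul_of_nonneg_left (le_max_left x y) ha,
    mul_le_mul_of_nonneg_left (le_max_right x y) hb]

theorem Tlat_eq_max (D : ℝ) {ρ ζ R Rs F η : ℝ} (hρ : 0 < ρ) (hζ : 0 < ζ) (hR : 0 < R)
    (hRs : 0 < Rs) (hF : 0 < F) (hη₀ : 0 ≤ η) (hη₁ : η ≤ 1) :
    Tlat D ρ ζ R Rs F η = D * max (max (1 / R) (η / (F / ρ))) ((ζ * η + 1 - η) / Rs) := by
  have hc : 0 < ζ * η + 1 - η := by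
    rcases hη₁.lt_or_eq with h | rfl <;> nlinarith
  have hf : 0 < F / ρ := div_pos hF hρ
  have hcompute : η * D * ρ / F = D * (η / (F / ρ)) := by field_simp
  unfold Tlat
  rw [hcompute, mul_div_assoc ζ, mul_div_assoc D, ← mul_one_div D R]
  generalize F / ρ = f at *
  set c := ζ * η + 1 - η
  split_ifs with h₁ h₂ h₃ h₄
  · rw [div_le_iff₀ hc] at h₃
    have hup : 1 / R ≤ c / Rs := by rw [div_le_div_iff₀ hR hRs]; nlinarith
    have hcomp : η / f ≤ c / Rs := by rw [div_le_div_iff₀ hf hRs]; nlinarith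
    rw [max_eq_right (max_le hup hcomp)]
  · rw [not_le, lt_div_iff₀ hc] at h₃
    have hup : 1 / R ≤ η / f := by rw [div_le_div_iff₀ hR hf]; nlinarith
    have hdown : c / Rs ≤ η / f := by rw [div_le_div_iff₀ hRs hf]; nlinarith
    rw [max_eq_right hup, max_eq_left hdown]
  · rw [not_le] at h₂
    have hup : 1 / R ≤ η / f := by rw [div_le_div_iff₀ hR hf]; nlinarith
    have hdown : c / Rs ≤ η / f := by rw [div_le_div_iff₀ hRs hf]; nlinarith
    rw [max_eq_right hup, max_eq_left hdown]
  · rw [not_le] at h₁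
    have hcomp : η / f ≤ 1 / R := by rw [div_le_div_iff₀ hf hR]; nlinarith
    have hup : 1 / R ≤ c / Rs := by rw [div_le_div_iff₀ hR hRs]; nlinarith
    rw [max_eq_left hcomp, max_eq_right hup]
  · rw [not_le] at h₁ h₄
    have hcomp : η / f ≤ 1 / R := by rw [div_le_div_iff₀ hf hR]; nlinarith
    have hdown : c / Rs ≤ 1 / R := by rw [div_le_div_iff₀ hRs hR]; nlinarith
    rw [max_eq_left hcomp, max_eq_left hdown]

theorem Vsto_eq_max (D : ℝ) {ρ ζ R Rs F η : ℝ} (hζ : ζ ≤ 1) :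
    Vsto D ρ ζ R Rs F η = D * max (max 0 (η * R - F / ρ))
      (max ((ζ * η + 1 - η) * R - Rs) (R - Rs - (1 - ζ) * F / ρ)) / R := by
  unfold Vsto
  simp only [mul_div_assoc]
  generalize F / ρ = f
  split_ifs with h₁ h₂ h₃
  · rw [max_eq_right (by nlinarith : (ζ * η + 1 - η) * R - Rs ≤ R - Rs - (1 - ζ) * f),
      max_eq_right (max_le (by nlinarith) (by linarith))]
  · rw [not_le] at h₂
    rw [max_eq_right (by linarith : 0 ≤ η * R - f),
      max_eq_left (max_le (by nlinarith) (by linarith))]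
  · rw [not_le] at h₁
    rw [max_eq_left (by nlinarith : R - Rs - (1 - ζ) * f ≤ (ζ * η + 1 - η) * R - Rs),
      max_eq_right (max_le (by linarith) (by linarith))]
  · rw [not_le] at h₁ h₃
    rw [max_eq_left (by linarith : η * R - f ≤ 0),
      max_eq_left (max_le (by linarith) (by nlinarith)), zero_div, mul_zero]

theorem Topt_le_Tlat {D ρ ζ R Rs F η : ℝ} (hD : 0 ≤ D) (hρ : 0 < ρ) (hζ : ζ ∈ Set.Ioo 0 1)
    (hR : 0 < R) (hRs : 0 < Rs) (hF : 0 < F) (hη : η ∈ Set.Icc 0 1) :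
    Topt D ρ ζ R Rs F ≤ Tlat D ρ ζ R Rs F η := by
  obtain ⟨hζ₀, hζ₁⟩ := hζ
  rw [Tlat_eq_max D hρ hζ₀ hR hRs hF hη.1 hη.2]
  set c := ζ * η + 1 - η
  set M := max (max (1 / R) (η / (F / ρ))) (c / Rs)
  have hupload : D / R ≤ D * M := by
    rw [← mul_one_div]; gcongr; exact le_max_of_le_left (le_max_left _ _)
  have hdownlink : ζ * D / Rs ≤ D * M := by
    calc ζ * D / Rs = D * (ζ / Rs) := by ring
      _ ≤ D * (c / Rs) := by gcongr; exact le_mul_add_one_sub hζ₁.le hη.2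
      _ ≤ D * M := by gcongr; exact le_max_right _ _
  have hbalanced : D * ρ / (F * (1 - ζ) + ρ * Rs) ≤ D * M := by
    calc D * ρ / (F * (1 - ζ) + ρ * Rs)
        = D * ((F * (1 - ζ) * (η / (F / ρ)) + ρ * Rs * (c / Rs)) / (F * (1 - ζ) + ρ * Rs)) := by
          field_simp; ring
      _ ≤ D * max (η / (F / ρ)) (c / Rs) := by
          gcongr; exact mul_add_mul_div_add_le_max (by nlinarith) (by positivity) (by nlinarith)
      _ ≤ D * M := mul_le_mul_of_nonneg_left (max_le_max_right _ (le_max_right _ _)) hD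
  unfold Topt
  split_ifs <;> assumption

theorem Vopt_le_Vsto {D ρ ζ R Rs F η : ℝ} (hD : 0 ≤ D) (hζ : ζ ≤ 1) (hR : 0 < R) (hη : η ≤ 1) :
    Vopt D ρ ζ R Rs F ≤ Vsto D ρ ζ R Rs F η := by
  rw [Vsto_eq_max D hζ]
  set m := max (max 0 (η * R - F / ρ))
    (max ((ζ * η + 1 - η) * R - Rs) (R - Rs - (1 - ζ) * F / ρ))
  have hempty : 0 ≤ D * m / R := by
    have : 0 ≤ m := le_max_of_le_left (le_max_left _ _)
    positivity
  have hoverflow : D * (R - Rs - (1 - ζ) * F / ρ) / R ≤ D * m / R := by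
    gcongr; exact le_max_of_le_right (le_max_right _ _)
  have hdownlink : D * (ζ * R - Rs) / R ≤ D * m / R := by
    gcongr
    calc ζ * R - Rs ≤ (ζ * η + 1 - η) * R - Rs := by gcongr; exact le_mul_add_one_sub hζ hη
      _ ≤ m := le_max_of_le_right (le_max_left _ _)
  unfold Vopt
  split_ifs <;> assumption

theorem Tlat_Vsto_zero_of_lt (D : ℝ) {ρ ζ R Rs F : ℝ} (hρ : 0 < ρ) (hF : 0 < F) (hRRs : R < Rs) :
    Tlat D ρ ζ R Rs F 0 = D / R ∧ Vsto D ρ ζ R Rs F 0 = 0 := by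
  have hcompute : ¬F / ρ ≤ 0 * R := by rw [zero_mul, not_le]; positivity
  have hlink : ¬Rs ≤ (ζ * 0 + 1 - 0) * R := by linarith
  simp only [Tlat, Vsto, if_neg hcompute, if_neg hlink, and_self]

/-- `F / (F * (1 - ζ) + ρ * Rs)` is the `η` at which computing and downlink take equally long. -/
theorem Tlat_Vsto_le_at_balanced {D ρ ζ R Rs F : ℝ} (hD : 0 ≤ D) (hρ : 0 < ρ)
    (hζ : ζ ∈ Set.Ioo 0 1) (hR : 0 < R) (hRs : 0 < Rs) (hF : 0 < F)
    (hA : F / ρ * (1 - ζ) ≤ R - Rs) (hB : F / ρ * ζ ≤ Rs) :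
    F / (F * (1 - ζ) + ρ * Rs) ∈ Set.Icc 0 1 ∧
    Tlat D ρ ζ R Rs F (F / (F * (1 - ζ) + ρ * Rs)) ≤ D * ρ / (F * (1 - ζ) + ρ * Rs) ∧
    Vsto D ρ ζ R Rs F (F / (F * (1 - ζ) + ρ * Rs)) ≤ D * (R - Rs - (1 - ζ) * F / ρ) / R := by
  obtain ⟨hζ₀, hζ₁⟩ := hζ
  obtain ⟨f, hf, rfl⟩ : ∃ f, 0 < f ∧ F = f * ρ := ⟨F / ρ, div_pos hF hρ, by field_simp⟩
  have hfρ : f * ρ / ρ = f := by field_simp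
  rw [hfρ] at hA hB
  set K := f * (1 - ζ) + Rs with hK_def
  have hK : 0 < K := by positivity
  have hscale : f * ρ * (1 - ζ) + ρ * Rs = K * ρ := by ring
  have hmem : f / K ∈ Set.Icc 0 1 := ⟨by positivity, by rw [div_le_one hK]; nlinarith⟩
  have hcompute : f / K / f = K⁻¹ := by field_simp
  have hout : ζ * (f / K) + 1 - f / K = Rs / K := by field_simp; ring
  have hbacklog : ∀ x : ℝ, x ≤ K → x / K * R - x ≤ R - K := fun x hx =>
    calc x / K * R - x = x / K * (R - K) := by field_simp
      _ ≤ R - K := mul_le_of_le_one_left (by linarith) ((div_le_one hK).2 hx)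
  rw [hscale, mul_div_mul_right _ _ hρ.ne', mul_div_mul_right _ _ hρ.ne',
    Tlat_eq_max D hρ hζ₀ hR hRs (by positivity) hmem.1 hmem.2, Vsto_eq_max D hζ₁.le, hfρ,
    hcompute, hout, div_div_cancel_left' hRs.ne', mul_div_assoc (1 - ζ), hfρ]
  refine ⟨hmem, ?_, ?_⟩
  · rw [div_eq_mul_inv D K]
    gcongr
    exact max_le (max_le (by rw [one_div]; exact inv_anti₀ hK (by linarith)) le_rfl) le_rfl
  · gcongr D * ?_ / R
    refine max_le (max_le (by linarith) ?_) (max_le ?_ le_rfl)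
    · linarith [hbacklog f (by linarith)]
    · linarith [hbacklog Rs (by nlinarith)]

/-- `(R - Rs) / ((1 - ζ) * R)` is the `η` at which the downlink is fed at exactly rate `Rs`. -/
theorem Tlat_Vsto_le_at_linkMatched {D ρ ζ R Rs F : ℝ} (hD : 0 ≤ D) (hρ : 0 < ρ)
    (hζ : ζ ∈ Set.Ioo 0 1) (hR : 0 < R) (hRs : 0 < Rs) (hF : 0 < F)
    (hRsR : Rs ≤ R) (hζR : R * ζ ≤ Rs) (hC : (R - Rs) / (1 - ζ) ≤ F / ρ) :
    (R - Rs) / ((1 - ζ) * R) ∈ Set.Icc 0 1 ∧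
    Tlat D ρ ζ R Rs F ((R - Rs) / ((1 - ζ) * R)) ≤ D / R ∧
    Vsto D ρ ζ R Rs F ((R - Rs) / ((1 - ζ) * R)) ≤ 0 := by
  obtain ⟨hζ₀, hζ₁⟩ := hζ
  have h1ζ : 0 < 1 - ζ := by linarith
  have hf : 0 < F / ρ := div_pos hF hρ
  have hmem : (R - Rs) / ((1 - ζ) * R) ∈ Set.Icc 0 1 :=
    ⟨div_nonneg (by linarith) (by positivity), by rw [div_le_one (by positivity)]; linarith⟩
  have hcompute : (R - Rs) / ((1 - ζ) * R) * R = (R - Rs) / (1 - ζ) := by field_simp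
  have hout : ζ * ((R - Rs) / ((1 - ζ) * R)) + 1 - (R - Rs) / ((1 - ζ) * R) = Rs / R := by
    field_simp; ring
  rw [Tlat_eq_max D hρ hζ₀ hR hRs hF hmem.1 hmem.2, Vsto_eq_max D hζ₁.le, hcompute, hout,
    div_div_cancel_left' hRs.ne', div_mul_cancel₀ _ hR.ne', sub_self, mul_div_assoc (1 - ζ)]
  refine ⟨hmem, ?_, ?_⟩
  · rw [← mul_one_div D R]
    gcongr
    refine max_le (max_le le_rfl ?_) (by rw [one_div])
    rwa [div_le_div_iff₀ hf hR, one_mul, hcompute]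
  · refine div_nonpos_of_nonpos_of_nonneg (mul_nonpos_of_nonneg_of_nonpos hD ?_) hR.le
    exact max_le (max_le le_rfl (sub_nonpos.2 hC))
      (max_le le_rfl (by linarith [(div_le_iff₀ h1ζ).1 hC]))

theorem Tlat_Vsto_le_at_one {D ρ ζ R Rs F : ℝ} (hD : 0 ≤ D) (hρ : 0 < ρ)
    (hζ : ζ ∈ Set.Ioo 0 1) (hR : 0 < R) (hRs : 0 < Rs) (hF : 0 < F)
    (hRζ : Rs ≤ R * ζ) (hFζ : Rs ≤ F / ρ * ζ) :
    Tlat D ρ ζ R Rs F 1 ≤ ζ * D / Rs ∧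
    Vsto D ρ ζ R Rs F 1 ≤ D * max (ζ * R - Rs) (R - Rs - (1 - ζ) * F / ρ) / R := by
  obtain ⟨hζ₀, hζ₁⟩ := hζ
  have hf : 0 < F / ρ := div_pos hF hρ
  rw [Tlat_eq_max D hρ hζ₀ hR hRs hF zero_le_one le_rfl, Vsto_eq_max D hζ₁.le,
    show ζ * 1 + 1 - 1 = ζ by ring, one_mul, mul_div_assoc (1 - ζ)]
  constructor
  · rw [mul_comm ζ, mul_div_assoc]
    gcongr
    refine max_le (max_le ?_ ?_) le_rfl
    · rw [div_le_div_iff₀ hR hRs]; linarith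
    · rw [div_le_div_iff₀ hf hRs]; linarith
  · gcongr D * ?_ / R
    refine max_le (max_le ?_ ?_) le_rfl
    · exact le_max_of_le_left (by linarith)
    · exact le_max_of_le_right (by linarith)

theorem etaOpt_mem_Icc_and_attains {D ρ ζ R Rs F : ℝ} (hD : 0 ≤ D) (hρ : 0 < ρ)
    (hζ : ζ ∈ Set.Ioo 0 1) (hR : 0 < R) (hRs : 0 < Rs) (hF : 0 < F) :
    etaOpt ρ ζ R Rs F ∈ Set.Icc 0 1 ∧
    Tlat D ρ ζ R Rs F (etaOpt ρ ζ R Rs F) ≤ Topt D ρ ζ R Rs F ∧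
    Vsto D ρ ζ R Rs F (etaOpt ρ ζ R Rs F) ≤ Vopt D ρ ζ R Rs F := by
  have h1ζ : 0 < 1 - ζ := sub_pos.2 hζ.2
  unfold etaOpt Topt Vopt
  split_ifs with hRRs hRζ hFR hFζ hFR'
  · obtain ⟨hT, hV⟩ := Tlat_Vsto_zero_of_lt D hρ hF hRRs
    exact ⟨⟨le_rfl, zero_le_one⟩, hT.le, hV.le⟩
  · rw [lt_div_iff₀ hζ.1] at hRζ
    rw [lt_div_iff₀ h1ζ] at hFR
    exact Tlat_Vsto_le_at_balanced hD hρ hζ hR hRs hF hFR.le (by nlinarith [hζ.1, hζ.2])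
  · rw [lt_div_iff₀ hζ.1] at hRζ
    exact Tlat_Vsto_le_at_linkMatched hD hρ hζ hR hRs hF (not_lt.1 hRRs) hRζ.le (not_lt.1 hFR)
  · rw [not_lt, div_le_iff₀ hζ.1] at hRζ
    rw [lt_div_iff₀ hζ.1] at hFζ
    exact Tlat_Vsto_le_at_balanced hD hρ hζ hR hRs hF (by nlinarith [hζ.1, hζ.2]) hFζ.le
  all_goals
    rw [not_lt, div_le_iff₀ hζ.1] at hRζ hFζ
    obtain ⟨hT, hV⟩ := Tlat_Vsto_le_at_one hD hρ hζ hR hRs hF hRζ hFζ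
    refine ⟨⟨zero_le_one, le_rfl⟩, hT, hV.trans_eq ?_⟩
    rw [mul_div_assoc (1 - ζ)]
  · rw [max_eq_right (by nlinarith)]
  · rw [max_eq_left (by nlinarith)]

/-- For all `R, Rs, F > 0`, `ηopt(R,Rs,F)` lies in `[0,1]` and simultaneously minimizes
both the upload latency and the required storage over `η ∈ [0,1]`; moreover the attained
values are `Topt(R,Rs,F)` and `Vopt(R,Rs,F)`. -/
theorem etaOpt_minimizes
    (D ρ ζ : ℝ) (hD : 0 < D) (hρ : 0 < ρ) (hζ : ζ ∈ Set.Ioo (0:ℝ) 1)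
    (R Rs F : ℝ) (hR : 0 < R) (hRs : 0 < Rs) (hF : 0 < F) :
    etaOpt ρ ζ R Rs F ∈ Set.Icc (0:ℝ) 1 ∧
    (∀ η ∈ Set.Icc (0:ℝ) 1,
      Tlat D ρ ζ R Rs F (etaOpt ρ ζ R Rs F) ≤ Tlat D ρ ζ R Rs F η ∧
      Vsto D ρ ζ R Rs F (etaOpt ρ ζ R Rs F) ≤ Vsto D ρ ζ R Rs F η) ∧
    Tlat D ρ ζ R Rs F (etaOpt ρ ζ R Rs F) = Topt D ρ ζ R Rs F ∧
    Vsto D ρ ζ R Rs F (etaOpt ρ ζ R Rs F) = Vopt D ρ ζ R Rs F := by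
  obtain ⟨hmem, hT, hV⟩ := etaOpt_mem_Icc_and_attains hD.le hρ hζ hR hRs hF
  have hTeq := le_antisymm hT (Topt_le_Tlat hD.le hρ hζ hR hRs hF hmem)
  have hVeq := le_antisymm hV (Vopt_le_Vsto hD.le hζ.2.le hR hmem.2)
  refine ⟨hmem, fun η hη => ⟨?_, ?_⟩, hTeq, hVeq⟩
  · rw [hTeq]; exact Topt_le_Tlat hD.le hρ hζ hR hRs hF hη
  · rw [hVeq]; exact Vopt_le_Vsto hD.le hζ.2.le hR hη.2

end
end

section
/- Suppose R > 0, Rs > 0, F > 0 and R < Rs. Then η = 0 simultaneously minimizes latency and storage: for every η ∈ [0,1], T(R,Rs,F,0) ≤ T(R,Rs,F,η) and V(R,Rs,F,0) ≤ V(R,Rs,F,η); moreover T(R,Rs,F,0) = D/R and V(R,Rs,F,0) = 0. -/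
/-!
With `η = 0` nothing is computed and, as `R < Rs`, the hub forwards data faster than it arrives:
the latency is `D / R` and nothing is stored. Storage is nonnegative in every case, and the
latency is at least `D / R` in every case: either computing is the bottleneck (`F/ρ ≤ η R`, so
processing `η D` takes at least `D / R`), or the forwarded volume `D (ζη + 1 - η)` meets a link
with `Rs ≤ (ζη + 1 - η) R`.
-/

noncomputable section

section

variable {D ρ ζ R Rs F η : ℝ}

lemma Tlat_zero_of_lt (hFρ : 0 < F / ρ) (hRRs : R < Rs) : Tlat D ρ ζ R Rs F 0 = D / R := by
  have hcomp : ¬F / ρ ≤ 0 * R := by simpa using hFρ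
  have hout : ¬Rs ≤ (ζ * 0 + 1 - 0) * R := by simpa using hRRs
  simp only [Tlat, if_neg hcomp, if_neg hout]

lemma Vsto_zero_of_lt (hFρ : 0 < F / ρ) (hRRs : R < Rs) : Vsto D ρ ζ R Rs F 0 = 0 := by
  have hcomp : ¬F / ρ ≤ 0 * R := by simpa using hFρ
  have hout : ¬Rs ≤ (ζ * 0 + 1 - 0) * R := by simpa using hRRs
  simp only [Vsto, if_neg hcomp, if_neg hout]

lemma outputFactor_pos (hζ : 0 < ζ) (hη0 : 0 ≤ η) (hη1 : η ≤ 1) : 0 < ζ * η + 1 - η := by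
  rcases hη0.eq_or_lt with rfl | hη
  · norm_num
  · linarith [mul_pos hζ hη]

lemma div_le_mul_div_of_le_mul {k : ℝ} (hD : 0 ≤ D) (hR : 0 < R) (hRs : 0 < Rs)
    (h : Rs ≤ k * R) : D / R ≤ D * k / Rs := by
  rw [div_le_div_iff₀ hR hRs]
  nlinarith

lemma div_le_mul_mul_div_of_div_le (hD : 0 ≤ D) (hR : 0 < R) (hρ : 0 < ρ) (hF : 0 < F)
    (h : F / ρ ≤ η * R) : D / R ≤ η * D * ρ / F := by
  rw [div_le_iff₀ hρ] at h
  rw [div_le_div_iff₀ hR hF]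
  nlinarith

lemma div_le_Tlat (hD : 0 ≤ D) (hρ : 0 < ρ) (hR : 0 < R) (hRs : 0 < Rs) (hF : 0 < F)
    (hk : 0 < ζ * η + 1 - η) : D / R ≤ Tlat D ρ ζ R Rs F η := by
  unfold Tlat
  split_ifs with hcomp hout hcap hout'
  · -- `F/ρ > 0` forces `η > 0`, so `η Rs / k ≤ F/ρ ≤ η R` gives `Rs ≤ k R`.
    have hη : 0 < η := pos_of_mul_pos_left ((div_pos hF hρ).trans_le hcomp) hR.le
    have hRs_le : Rs ≤ (ζ * η + 1 - η) * R := by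
      rw [div_le_iff₀ hk] at hcap
      nlinarith
    exact div_le_mul_div_of_le_mul hD hR hRs hRs_le
  · exact div_le_mul_mul_div_of_div_le hD hR hρ hF hcomp
  · exact div_le_mul_mul_div_of_div_le hD hR hρ hF hcomp
  · exact div_le_mul_div_of_le_mul hD hR hRs hout'
  · exact le_rfl

lemma Vsto_nonneg (hD : 0 ≤ D) (hR : 0 < R) : 0 ≤ Vsto D ρ ζ R Rs F η := by
  unfold Vsto
  split_ifs with hcomp hout hout'
  · refine div_nonneg (mul_nonneg hD ?_) hR.le
    rw [mul_div_assoc] at hout ⊢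
    linarith
  · exact div_nonneg (mul_nonneg hD (by linarith)) hR.le
  · exact div_nonneg (mul_nonneg hD (by linarith)) hR.le
  · exact le_rfl

end

/-- If `R < Rs`, then `η = 0` simultaneously minimizes latency and storage over `η ∈ [0,1]`,
with `T(R,Rs,F,0) = D/R` and `V(R,Rs,F,0) = 0`. -/
theorem eta_zero_optimal_of_R_lt_Rs
    (D ρ ζ : ℝ) (hD : 0 < D) (hρ : 0 < ρ) (hζ : ζ ∈ Set.Ioo (0:ℝ) 1)
    (R Rs F : ℝ) (hR : 0 < R) (hRs : 0 < Rs) (hF : 0 < F)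
    (hcase : R < Rs) :
    (∀ η ∈ Set.Icc (0:ℝ) 1,
      Tlat D ρ ζ R Rs F 0 ≤ Tlat D ρ ζ R Rs F η ∧
      Vsto D ρ ζ R Rs F 0 ≤ Vsto D ρ ζ R Rs F η) ∧
    Tlat D ρ ζ R Rs F 0 = D / R ∧
    Vsto D ρ ζ R Rs F 0 = 0 := by
  have hFρ : 0 < F / ρ := div_pos hF hρ
  have hT0 := Tlat_zero_of_lt (D := D) (ζ := ζ) hFρ hcase
  have hV0 := Vsto_zero_of_lt (D := D) (ζ := ζ) hFρ hcase
  refine ⟨fun η ⟨hη0, hη1⟩ => ⟨?_, ?_⟩, hT0, hV0⟩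
  · rw [hT0]
    exact div_le_Tlat hD.le hρ hR hRs hF (outputFactor_pos hζ.1 hη0 hη1)
  · rw [hV0]
    exact Vsto_nonneg hD.le hR

end
end

section
/- Suppose R > 0, Rs > 0, F > 0, R ≥ Rs/ζ and F/ρ ≥ R. Then η* = 1 simultaneously minimizes latency and storage: for every η ∈ [0,1], T(R,Rs,F,1) ≤ T(R,Rs,F,η) and V(R,Rs,F,1) ≤ V(R,Rs,F,η); moreover T(R,Rs,F,1) = ζD/Rs and V(R,Rs,F,1) = D(ζR − Rs)/R. -/
noncomputable section

/-! Whenever `η ≤ 1`, the stream `ηR` sent to the processor stays within its capacity `F/ρ`, so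
the only bottleneck is the hub-to-satellite link, which has to carry the fraction `ζη + 1 − η` of
the data. In that regime `T` and `V` are increasing in this fraction, which is smallest at `η = 1`
since `ζ < 1`. At the boundary `ηR = F/ρ` the saturated-processor branches (i) and the
idle-processor branch (iv) give the same values, so no case distinction survives. -/

section LinkBottleneck

variable {D ρ ζ R Rs F η : ℝ}

theorem Tlat_eq_of_link_bottleneck (hη : 0 ≤ η) (hc : 0 < ζ * η + 1 - η)
    (hcomp : η * R ≤ F / ρ) (hlink : Rs ≤ (ζ * η + 1 - η) * R) :
    Tlat D ρ ζ R Rs F η = D * (ζ * η + 1 - η) / Rs := by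
  unfold Tlat
  split_ifs with hsat hout hproc
  · rfl
  · have hFR : F / ρ = η * R := le_antisymm hsat hcomp
    refine absurd ?_ hproc
    rw [hFR, div_le_iff₀ hc]
    nlinarith
  · have hFR : F / ρ = η * R := le_antisymm hsat hcomp
    refine absurd ?_ hout
    rw [mul_div_assoc, hFR]
    linarith
  · rfl

theorem Vsto_eq_of_link_bottleneck (hcomp : η * R ≤ F / ρ)
    (hlink : Rs ≤ (ζ * η + 1 - η) * R) :
    Vsto D ρ ζ R Rs F η = D * ((ζ * η + 1 - η) * R - Rs) / R := by
  unfold Vsto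
  split_ifs with hsat hout
  · have hFR : F / ρ = η * R := le_antisymm hsat hcomp
    rw [mul_div_assoc (1 - ζ), hFR]
    ring
  · have hFR : F / ρ = η * R := le_antisymm hsat hcomp
    refine absurd ?_ hout
    rw [mul_div_assoc, hFR]
    linarith
  · rfl

end LinkBottleneck

theorem eta_opt_case6_general
    (D ρ ζ : ℝ) (hD : 0 < D) (hζ : ζ ∈ Set.Ioo (0:ℝ) 1)
    (R Rs F : ℝ) (hR : 0 < R) (hRs : 0 < Rs)
    (h1 : Rs / ζ ≤ R) (h2 : R ≤ F / ρ) :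
    (∀ η ∈ Set.Icc (0:ℝ) 1,
      Tlat D ρ ζ R Rs F 1 ≤ Tlat D ρ ζ R Rs F η ∧
      Vsto D ρ ζ R Rs F 1 ≤ Vsto D ρ ζ R Rs F η) ∧
    Tlat D ρ ζ R Rs F 1 = ζ * D / Rs ∧
    Vsto D ρ ζ R Rs F 1 = D * (ζ * R - Rs) / R := by
  obtain ⟨hζ0, hζ1⟩ := hζ
  have hRs_le : Rs ≤ ζ * R := by rwa [div_le_iff₀' hζ0] at h1
  have closed_form : ∀ η ∈ Set.Icc (0:ℝ) 1, ζ ≤ ζ * η + 1 - η ∧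
      Tlat D ρ ζ R Rs F η = D * (ζ * η + 1 - η) / Rs ∧
      Vsto D ρ ζ R Rs F η = D * ((ζ * η + 1 - η) * R - Rs) / R := by
    rintro η ⟨hη0, hη1⟩
    have hζc : ζ ≤ ζ * η + 1 - η := by nlinarith
    have hcomp : η * R ≤ F / ρ := by nlinarith
    have hlink : Rs ≤ (ζ * η + 1 - η) * R := hRs_le.trans (by gcongr)
    exact ⟨hζc, Tlat_eq_of_link_bottleneck hη0 (by linarith) hcomp hlink,
      Vsto_eq_of_link_bottleneck hcomp hlink⟩
  obtain ⟨-, hT1, hV1⟩ := closed_form 1 ⟨zero_le_one, le_rfl⟩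
  simp only [mul_one, add_sub_cancel_right] at hT1 hV1
  refine ⟨fun η hη => ?_, by rw [hT1, mul_comm], hV1⟩
  obtain ⟨hζc, hT, hV⟩ := closed_form η hη
  rw [hT1, hV1, hT, hV]
  constructor <;> gcongr

/-- If `R ≥ Rs/ζ` and `F/ρ ≥ R`, then `η* = 1` simultaneously minimizes latency and
storage, with `T = ζD/Rs` and `V = D(ζR−Rs)/R`. -/
theorem eta_opt_case6
    (D ρ ζ : ℝ) (hD : 0 < D) (hρ : 0 < ρ) (hζ : ζ ∈ Set.Ioo (0:ℝ) 1)
    (R Rs F : ℝ) (hR : 0 < R) (hRs : 0 < Rs) (hF : 0 < F)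
    (h1 : Rs / ζ ≤ R) (h2 : R ≤ F / ρ) :
    (∀ η ∈ Set.Icc (0:ℝ) 1,
      Tlat D ρ ζ R Rs F 1 ≤ Tlat D ρ ζ R Rs F η ∧
      Vsto D ρ ζ R Rs F 1 ≤ Vsto D ρ ζ R Rs F η) ∧
    Tlat D ρ ζ R Rs F 1 = ζ * D / Rs ∧
    Vsto D ρ ζ R Rs F 1 = D * (ζ * R - Rs) / R :=
  eta_opt_case6_general D ρ ζ hD hζ R Rs F hR hRs h1 h2
end
end

section
/- If x* = (Btot*, RStot*, Ftot*, Vtot*, (B_u*), (Rs_u*), (F_u*)) is (P3)-feasible and J(x*) ≤ J(x) for every (P3)-feasible point x, then in fact J(x*) ≤ J(x) for every (P2)-feasible point x; that is, every optimal solution of (P3) is an optimal solution of (P2). -/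
/-!
Per user, the latency is `Topt = D / R_eff` with effective rate
`R_eff = min (R, Rs + (1 - ζ) F / ρ, Rs / ζ)`. Shrinking `R` to `R_eff`, `Rs` to `min Rs R` and
`F` to `ρ (R_eff - min Rs R) / (1 - ζ)` gives a point satisfying the (P3) constraints, with the
same effective rate (hence the same latency), zero storage and no larger bandwidth (by
monotonicity of `R_u`), rate or frequency. So every (P2)-feasible point has a (P3)-feasible
companion with the same totals, hence the same cost.
-/

noncomputable section

/-- The overall resource cost `J = a1·Btot + a2·RStot + a3·Ftot + a4·Vtot`. -/
def cost (a1 a2 a3 a4 Btot RStot Ftot Vtot : ℝ) : ℝ :=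
  a1 * Btot + a2 * RStot + a3 * Ftot + a4 * Vtot

/-- Feasibility for problem (P2) (here the per-user CPU frequencies satisfy `F_u ≥ 0`). -/
def P2Feas (U : ℕ) (D ρ ζ : Fin U → ℝ) (Rfun : Fin U → ℝ → ℝ) (Treq : ℝ)
    (Btot RStot Ftot Vtot : ℝ) (B Rs F : Fin U → ℝ) : Prop :=
  0 ≤ Btot ∧ 0 ≤ RStot ∧ 0 ≤ Ftot ∧ 0 ≤ Vtot ∧
  (∀ u, 0 ≤ B u) ∧ (∀ u, 0 < Rfun u (B u)) ∧ (∀ u, 0 < Rs u) ∧ (∀ u, 0 ≤ F u) ∧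
  (∀ u, Topt (D u) (ρ u) (ζ u) (Rfun u (B u)) (Rs u) (F u) ≤ Treq) ∧
  (∑ u, Vopt (D u) (ρ u) (ζ u) (Rfun u (B u)) (Rs u) (F u)) ≤ Vtot ∧
  (∑ u, B u) ≤ Btot ∧ (∑ u, Rs u) ≤ RStot ∧ (∑ u, F u) ≤ Ftot

/-- Feasibility for problem (P3): (P2)-feasibility plus the extra constraints
`Rs_u ≤ R_u(B_u) ≤ Rs_u/ζ_u` and `F_u = ρ_u(R_u(B_u) − Rs_u)/(1−ζ_u)`. -/
def P3Feas (U : ℕ) (D ρ ζ : Fin U → ℝ) (Rfun : Fin U → ℝ → ℝ) (Treq : ℝ)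
    (Btot RStot Ftot Vtot : ℝ) (B Rs F : Fin U → ℝ) : Prop :=
  P2Feas U D ρ ζ Rfun Treq Btot RStot Ftot Vtot B Rs F ∧
  (∀ u, Rs u ≤ Rfun u (B u) ∧ Rfun u (B u) ≤ Rs u / ζ u) ∧
  (∀ u, F u = ρ u * (Rfun u (B u) - Rs u) / (1 - ζ u))

def effectiveRate (ρ ζ R Rs F : ℝ) : ℝ :=
  min R (min (Rs + (1 - ζ) * F / ρ) (Rs / ζ))

section UserReduction

variable {ρ ζ R Rs F : ℝ}

theorem effectiveRate_le_rate : effectiveRate ρ ζ R Rs F ≤ R := min_le_left _ _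

theorem min_le_effectiveRate (hρ : 0 < ρ) (hζ : ζ ∈ Set.Ioo 0 1) (hRs : 0 ≤ Rs) (hF : 0 ≤ F) :
    min Rs R ≤ effectiveRate ρ ζ R Rs F := by
  have hRsζ : Rs ≤ Rs / ζ := le_div_self hRs hζ.1 hζ.2.le
  have hc : 0 ≤ (1 - ζ) * F / ρ := div_nonneg (mul_nonneg (by linarith [hζ.2]) hF) hρ.le
  have := min_le_left Rs R
  exact le_min (min_le_right _ _) (le_min (by linarith) (by linarith))

theorem effectiveRate_le_min_div (hζ : ζ ∈ Set.Ioo 0 1) (hR : 0 ≤ R) :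
    effectiveRate ρ ζ R Rs F ≤ min Rs R / ζ := by
  rcases le_total Rs R with h | h
  · rw [min_eq_left h]
    exact (min_le_right _ _).trans (min_le_right _ _)
  · rw [min_eq_right h]
    exact effectiveRate_le_rate.trans (le_div_self hR hζ.1 hζ.2.le)

theorem effectiveRate_sub_min_le (hc : 0 ≤ (1 - ζ) * F / ρ) :
    effectiveRate ρ ζ R Rs F - min Rs R ≤ (1 - ζ) * F / ρ := by
  rcases le_total Rs R with h | h
  · rw [min_eq_left h]
    have : effectiveRate ρ ζ R Rs F ≤ Rs + (1 - ζ) * F / ρ :=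
      (min_le_right _ _).trans (min_le_left _ _)
    linarith
  · rw [min_eq_right h]
    linarith [(effectiveRate_le_rate : effectiveRate ρ ζ R Rs F ≤ R)]

theorem effectiveRate_of_balanced (hρ : ρ ≠ 0) (hζ : ζ ≠ 1) (hR : R ≤ Rs / ζ) :
    effectiveRate ρ ζ R Rs (ρ * (R - Rs) / (1 - ζ)) = R := by
  have h : Rs + (1 - ζ) * (ρ * (R - Rs) / (1 - ζ)) / ρ = R := by
    field_simp [sub_ne_zero.mpr hζ.symm]; ring
  rw [effectiveRate, h, min_eq_left hR, min_self]

theorem topt_eq_div_effectiveRate (D : ℝ) (hρ : 0 < ρ) (hζ : ζ ∈ Set.Ioo 0 1) (hRs : 0 < Rs)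
    (hF : 0 ≤ F) : Topt D ρ ζ R Rs F = D / effectiveRate ρ ζ R Rs F := by
  obtain ⟨hζ0, hζ1⟩ := hζ
  have h1ζ : 0 < 1 - ζ := by linarith
  have hRsζ : Rs < Rs / ζ := (lt_div_iff₀ hζ0).mpr (by nlinarith)
  have hc : 0 ≤ (1 - ζ) * F / ρ := by positivity
  have hcompute : F / ρ < (R - Rs) / (1 - ζ) ↔ Rs + (1 - ζ) * F / ρ < R := by
    rw [mul_div_assoc, lt_div_iff₀ h1ζ]; constructor <;> intro <;> linarith
  have hsaturate : F / ρ < Rs / ζ ↔ Rs + (1 - ζ) * F / ρ < Rs / ζ := by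
    have hgap : Rs / ζ = Rs + (1 - ζ) * (Rs / ζ) := by field_simp; ring
    rw [mul_div_assoc]
    conv_rhs => rw [hgap]
    rw [add_lt_add_iff_left, mul_lt_mul_iff_of_pos_left h1ζ]
  have hcompute_latency : D * ρ / (F * (1 - ζ) + ρ * Rs) = D / (Rs + (1 - ζ) * F / ρ) := by
    field_simp; ring
  have hsaturate_latency : ζ * D / Rs = D / (Rs / ζ) := by field_simp
  unfold Topt effectiveRate
  simp only [hcompute, hsaturate, hcompute_latency, hsaturate_latency]
  split_ifs <;> congr 1 <;> simp only [min_def] <;> split_ifs <;> linarith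

theorem vopt_eq_zero_of_balanced (D : ℝ) (hρ : ρ ≠ 0) (hζ : ζ ∈ Set.Ioo 0 1) (hRs : Rs ≤ R)
    (hR : R ≤ Rs / ζ) : Vopt D ρ ζ R Rs (ρ * (R - Rs) / (1 - ζ)) = 0 := by
  have h1ζ : 1 - ζ ≠ 0 := sub_ne_zero.mpr hζ.2.ne'
  have hFρ : ρ * (R - Rs) / (1 - ζ) / ρ = (R - Rs) / (1 - ζ) := by field_simp
  unfold Vopt
  rw [if_neg hRs.not_gt, hFρ]
  rcases hR.lt_or_eq with hlt | heq
  · rw [if_pos hlt, if_neg (lt_irrefl _)]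
  · have hRs_eq : Rs = ζ * R := by rw [heq]; field_simp [hζ.1.ne']
    have hFR : (R - Rs) / (1 - ζ) = R := by rw [hRs_eq]; field_simp
    rw [if_neg heq.not_lt, hFR, ← heq, if_neg (lt_irrefl _), if_neg (lt_irrefl _), hRs_eq, sub_self,
      mul_zero, zero_div]

def reducedCpu (ρ ζ R Rs F : ℝ) : ℝ :=
  ρ * (effectiveRate ρ ζ R Rs F - min Rs R) / (1 - ζ)

theorem reducedCpu_le (hρ : 0 < ρ) (hζ : ζ < 1) (hF : 0 ≤ F) : reducedCpu ρ ζ R Rs F ≤ F := by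
  have h1ζ : 0 < 1 - ζ := by linarith
  have hgap : effectiveRate ρ ζ R Rs F - min Rs R ≤ (1 - ζ) * F / ρ :=
    effectiveRate_sub_min_le (by positivity)
  rw [le_div_iff₀ hρ] at hgap
  rw [reducedCpu, div_le_iff₀ h1ζ]
  linarith

theorem reducedCpu_nonneg (hρ : 0 < ρ) (hζ : ζ ∈ Set.Ioo 0 1) (hRs : 0 ≤ Rs) (hF : 0 ≤ F) :
    0 ≤ reducedCpu ρ ζ R Rs F := by
  have h1ζ : 0 < 1 - ζ := by linarith [hζ.2]
  have := min_le_effectiveRate (R := R) hρ hζ hRs hF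
  exact div_nonneg (mul_nonneg hρ.le (by linarith)) h1ζ.le

theorem topt_reduced_eq (D : ℝ) (hρ : 0 < ρ) (hζ : ζ ∈ Set.Ioo 0 1) (hR : 0 < R) (hRs : 0 < Rs)
    (hF : 0 ≤ F) :
    Topt D ρ ζ (effectiveRate ρ ζ R Rs F) (min Rs R) (reducedCpu ρ ζ R Rs F) =
      Topt D ρ ζ R Rs F := by
  rw [topt_eq_div_effectiveRate D hρ hζ (lt_min hRs hR) (reducedCpu_nonneg hρ hζ hRs.le hF),
    reducedCpu, effectiveRate_of_balanced hρ.ne' hζ.2.ne (effectiveRate_le_min_div hζ hR.le),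
    topt_eq_div_effectiveRate D hρ hζ hRs hF]

theorem vopt_reduced_eq_zero (D : ℝ) (hρ : 0 < ρ) (hζ : ζ ∈ Set.Ioo 0 1) (hR : 0 ≤ R)
    (hRs : 0 ≤ Rs) (hF : 0 ≤ F) :
    Vopt D ρ ζ (effectiveRate ρ ζ R Rs F) (min Rs R) (reducedCpu ρ ζ R Rs F) = 0 :=
  vopt_eq_zero_of_balanced D hρ.ne' hζ (min_le_effectiveRate hρ hζ hRs hF)
    (effectiveRate_le_min_div hζ hR)

end UserReduction

theorem exists_p3Feas_of_p2Feas {U : ℕ} {D ρ ζ : Fin U → ℝ} {Rfun : Fin U → ℝ → ℝ}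
    {Treq Btot RStot Ftot Vtot : ℝ} {B Rs F : Fin U → ℝ} (hρ : ∀ u, 0 < ρ u)
    (hζ : ∀ u, ζ u ∈ Set.Ioo (0:ℝ) 1) (hmono : ∀ u, StrictMonoOn (Rfun u) (Set.Ici 0))
    (hsurj : ∀ u, Set.SurjOn (Rfun u) (Set.Ici 0) (Set.Ici 0))
    (h : P2Feas U D ρ ζ Rfun Treq Btot RStot Ftot Vtot B Rs F) :
    ∃ B' Rs' F', P3Feas U D ρ ζ Rfun Treq Btot RStot Ftot Vtot B' Rs' F' := by
  obtain ⟨hBtot, hRStot, hFtot, hVtot, hB, hR, hRs, hF, hT, -, hBsum, hRssum, hFsum⟩ := h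
  set R' : Fin U → ℝ := fun u => effectiveRate (ρ u) (ζ u) (Rfun u (B u)) (Rs u) (F u)
  have hR'pos (u : Fin U) : 0 < R' u :=
    (lt_min (hRs u) (hR u)).trans_le (min_le_effectiveRate (hρ u) (hζ u) (hRs u).le (hF u))
  choose B' hB' hRB' using fun u => hsurj u (Set.mem_Ici.mpr (hR'pos u).le)
  have hB'le (u : Fin U) : B' u ≤ B u :=
    ((hmono u).le_iff_le (hB' u) (hB u)).mp ((hRB' u).trans_le effectiveRate_le_rate)
  refine ⟨B', fun u => min (Rs u) (Rfun u (B u)),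
    fun u => reducedCpu (ρ u) (ζ u) (Rfun u (B u)) (Rs u) (F u),
    ⟨hBtot, hRStot, hFtot, hVtot, hB', fun u => hRB' u ▸ hR'pos u,
      fun u => lt_min (hRs u) (hR u), fun u => reducedCpu_nonneg (hρ u) (hζ u) (hRs u).le (hF u),
      fun u => ?_, ?_, ?_, ?_, ?_⟩, fun u => ?_, fun u => ?_⟩
  · rw [hRB', topt_reduced_eq _ (hρ u) (hζ u) (hR u) (hRs u) (hF u)]
    exact hT u
  · refine (Finset.sum_eq_zero fun u _ => ?_).trans_le hVtot
    rw [hRB']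
    exact vopt_reduced_eq_zero _ (hρ u) (hζ u) (hR u).le (hRs u).le (hF u)
  · exact (Finset.sum_le_sum fun u _ => hB'le u).trans hBsum
  · exact (Finset.sum_le_sum fun u _ => min_le_left _ _).trans hRssum
  · exact (Finset.sum_le_sum fun u _ => reducedCpu_le (hρ u) (hζ u).2 (hF u)).trans hFsum
  · rw [hRB']
    exact ⟨min_le_effectiveRate (hρ u) (hζ u) (hRs u).le (hF u),
      effectiveRate_le_min_div (hζ u) (hR u).le⟩
  · rw [hRB']
    rfl

theorem p3_optimal_is_p2_optimal_general
    (U : ℕ)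
    (D ρ ζ : Fin U → ℝ) (hρ : ∀ u, 0 < ρ u)
    (hζ : ∀ u, ζ u ∈ Set.Ioo (0:ℝ) 1)
    (Rfun : Fin U → ℝ → ℝ)
    (hmono : ∀ u, StrictMonoOn (Rfun u) (Set.Ici 0))
    (hbij : ∀ u, Set.BijOn (Rfun u) (Set.Ici 0) (Set.Ici 0))
    (a1 a2 a3 a4 Treq : ℝ)
    (Btot RStot Ftot Vtot : ℝ)
    (hopt : ∀ Btot' RStot' Ftot' Vtot' B' Rs' F',
      P3Feas U D ρ ζ Rfun Treq Btot' RStot' Ftot' Vtot' B' Rs' F' →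
      cost a1 a2 a3 a4 Btot RStot Ftot Vtot ≤ cost a1 a2 a3 a4 Btot' RStot' Ftot' Vtot') :
    ∀ Btot' RStot' Ftot' Vtot' B' Rs' F',
      P2Feas U D ρ ζ Rfun Treq Btot' RStot' Ftot' Vtot' B' Rs' F' →
      cost a1 a2 a3 a4 Btot RStot Ftot Vtot ≤ cost a1 a2 a3 a4 Btot' RStot' Ftot' Vtot' := by
  intro Btot' RStot' Ftot' Vtot' B' Rs' F' hP2
  obtain ⟨_, _, _, hP3⟩ :=
    exists_p3Feas_of_p2Feas hρ hζ hmono (fun u => (hbij u).surjOn) hP2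
  exact hopt _ _ _ _ _ _ _ hP3

/-- Every optimal solution of (P3) is an optimal solution of (P2). -/
theorem p3_optimal_is_p2_optimal
    (U : ℕ) (hU : 1 ≤ U)
    (D ρ ζ : Fin U → ℝ) (hD : ∀ u, 0 < D u) (hρ : ∀ u, 0 < ρ u)
    (hζ : ∀ u, ζ u ∈ Set.Ioo (0:ℝ) 1)
    (Rfun : Fin U → ℝ → ℝ)
    (hmono : ∀ u, StrictMonoOn (Rfun u) (Set.Ici 0))
    (hcont : ∀ u, ContinuousOn (Rfun u) (Set.Ici 0))
    (hbij : ∀ u, Set.BijOn (Rfun u) (Set.Ici 0) (Set.Ici 0))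
    (a1 a2 a3 a4 Treq : ℝ)
    (ha1 : 0 ≤ a1) (ha2 : 0 ≤ a2) (ha3 : 0 ≤ a3) (ha4 : 0 ≤ a4) (hTreq : 0 < Treq)
    (Btot RStot Ftot Vtot : ℝ) (B Rs F : Fin U → ℝ)
    (hfeas : P3Feas U D ρ ζ Rfun Treq Btot RStot Ftot Vtot B Rs F)
    (hopt : ∀ Btot' RStot' Ftot' Vtot' B' Rs' F',
      P3Feas U D ρ ζ Rfun Treq Btot' RStot' Ftot' Vtot' B' Rs' F' →
      cost a1 a2 a3 a4 Btot RStot Ftot Vtot ≤ cost a1 a2 a3 a4 Btot' RStot' Ftot' Vtot') :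
    ∀ Btot' RStot' Ftot' Vtot' B' Rs' F',
      P2Feas U D ρ ζ Rfun Treq Btot' RStot' Ftot' Vtot' B' Rs' F' →
      cost a1 a2 a3 a4 Btot RStot Ftot Vtot ≤ cost a1 a2 a3 a4 Btot' RStot' Ftot' Vtot' :=
  p3_optimal_is_p2_optimal_general U D ρ ζ hρ hζ Rfun hmono hbij a1 a2 a3 a4 Treq Btot RStot Ftot
    Vtot hopt

end
end

section
/- For every (P4)-feasible point x there exists a (P4)-feasible point x' with B_u' = R_u⁻¹(D_u/T_req) for every u and Btot' = Σ_u R_u⁻¹(D_u/T_req), such that J4(x') ≤ J4(x). In particular, if (P4) admits a minimizer of J4 over its feasible set, then it admits a minimizer satisfying these equalities. -/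
/-!
Lowering a user's bandwidth until its rate equals the demand `d = D/T_req` can only help,
provided the other per-user quantities follow along: scaling the rate `R(B)`, the
split `Rs` and the fee `F` of a user by the common factor `d / R(B) ∈ (0, 1]` preserves the
band `Rs ≤ R ≤ Rs/ζ` and the fee formula (both are homogeneous of degree one) and shrinks
every sum, so the totals `RStot`, `Ftot` stay admissible while `Btot` drops to
`Σ_u R_u⁻¹(d_u)`.
-/

noncomputable section

def J4 (a1 a2 a3 Btot RStot Ftot : ℝ) : ℝ := a1 * Btot + a2 * RStot + a3 * Ftot

def P4Feas (U : ℕ) (D ρ ζ : Fin U → ℝ) (Rfun : Fin U → ℝ → ℝ) (Treq : ℝ)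
    (Btot RStot Ftot : ℝ) (B Rs F : Fin U → ℝ) : Prop :=
  0 ≤ Btot ∧ 0 ≤ RStot ∧ 0 ≤ Ftot ∧
  (∀ u, 0 ≤ B u) ∧ (∀ u, 0 < Rs u) ∧ (∀ u, 0 ≤ F u) ∧
  (∀ u, D u / Treq ≤ Rfun u (B u)) ∧
  (∀ u, Rs u ≤ Rfun u (B u) ∧ Rfun u (B u) ≤ Rs u / ζ u) ∧
  (∀ u, F u = ρ u * (Rfun u (B u) - Rs u) / (1 - ζ u)) ∧
  (∑ u, B u) ≤ Btot ∧ (∑ u, Rs u) ≤ RStot ∧ (∑ u, F u) ≤ Ftot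

theorem J4_le_J4_of_le {a1 a2 a3 Btot Btot' RStot Ftot : ℝ} (ha1 : 0 ≤ a1) (h : Btot' ≤ Btot) :
    J4 a1 a2 a3 Btot' RStot Ftot ≤ J4 a1 a2 a3 Btot RStot Ftot := by
  unfold J4
  gcongr

theorem StrictMonoOn.rightInv_le_of_le {α β : Type*} [LinearOrder α] [Preorder β]
    {s : Set α} {f : α → β} {g : β → α} {x : β} {b : α}
    (hf : StrictMonoOn f s) (hfg : f (g x) = x) (hg : g x ∈ s) (hb : b ∈ s)
    (hx : x ≤ f b) : g x ≤ b :=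
  (hf.le_iff_le hg hb).mp (hfg.symm ▸ hx)

theorem sum_mul_le_sum_of_le_one {ι : Type*} [Fintype ι] {t x : ι → ℝ} (ht : ∀ i, t i ≤ 1)
    (hx : ∀ i, 0 ≤ x i) : ∑ i, t i * x i ≤ ∑ i, x i :=
  Finset.sum_le_sum fun i _ => mul_le_of_le_one_left (hx i) (ht i)

theorem P4Feas.rescale_to_demand {U : ℕ} {D ρ ζ : Fin U → ℝ} {Rfun Rinv : Fin U → ℝ → ℝ}
    {Treq Btot RStot Ftot : ℝ} {B Rs F : Fin U → ℝ}
    (hd : ∀ u, 0 < D u / Treq)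
    (hmono : ∀ u, StrictMonoOn (Rfun u) (Set.Ici 0))
    (hinv_right : ∀ u x, 0 ≤ x → Rfun u (Rinv u x) = x)
    (hinv_nonneg : ∀ u x, 0 ≤ x → 0 ≤ Rinv u x)
    (h : P4Feas U D ρ ζ Rfun Treq Btot RStot Ftot B Rs F) :
    let t u := D u / Treq / Rfun u (B u)
    P4Feas U D ρ ζ Rfun Treq (∑ u, Rinv u (D u / Treq)) RStot Ftot
        (fun u => Rinv u (D u / Treq)) (fun u => t u * Rs u) (fun u => t u * F u) ∧
      ∑ u, Rinv u (D u / Treq) ≤ Btot := by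
  intro t
  obtain ⟨-, hRStot, hFtot, hB, hRs, hF, hdemand, hband, hfee, hsumB, hsumRs, hsumF⟩ := h
  have hrate u : Rfun u (Rinv u (D u / Treq)) = D u / Treq := hinv_right u _ (hd u).le
  have hB' u : 0 ≤ Rinv u (D u / Treq) := hinv_nonneg u _ (hd u).le
  have hr u : 0 < Rfun u (B u) := (hd u).trans_le (hdemand u)
  have ht u : t u ∈ Set.Ioc 0 1 := ⟨div_pos (hd u) (hr u), div_le_one_of_le₀ (hdemand u) (hr u).le⟩
  have hdt u : t u * Rfun u (B u) = D u / Treq := div_mul_cancel₀ _ (hr u).ne'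
  have hB'_le u : Rinv u (D u / Treq) ≤ B u :=
    (hmono u).rightInv_le_of_le (hrate u) (hB' u) (hB u) (hdemand u)
  refine ⟨⟨Finset.sum_nonneg fun u _ => hB' u, hRStot, hFtot, hB',
    fun u => mul_pos (ht u).1 (hRs u), fun u => mul_nonneg (ht u).1.le (hF u),
    fun u => (hrate u).ge, fun u => ?_, fun u => ?_, le_rfl,
    (sum_mul_le_sum_of_le_one (fun u => (ht u).2) fun u => (hRs u).le).trans hsumRs,
    (sum_mul_le_sum_of_le_one (fun u => (ht u).2) hF).trans hsumF⟩,
    (Finset.sum_le_sum fun u _ => hB'_le u).trans hsumB⟩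
  · rw [hrate, ← hdt u, mul_div_assoc]
    exact ⟨mul_le_mul_of_nonneg_left (hband u).1 (ht u).1.le,
      mul_le_mul_of_nonneg_left (hband u).2 (ht u).1.le⟩
  · rw [hrate, ← hdt u]
    simp only [hfee u]
    ring

theorem p4_optimal_bandwidth_general
    (U : ℕ)
    (D ρ ζ : Fin U → ℝ) (hD : ∀ u, 0 < D u)
    (Rfun Rinv : Fin U → ℝ → ℝ)
    (hmono : ∀ u, StrictMonoOn (Rfun u) (Set.Ici 0))
    (hinv_right : ∀ u x, 0 ≤ x → Rfun u (Rinv u x) = x)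
    (hinv_nonneg : ∀ u x, 0 ≤ x → 0 ≤ Rinv u x)
    (a1 a2 a3 Treq : ℝ) (ha1 : 0 ≤ a1) (hTreq : 0 < Treq) :
    (∀ Btot RStot Ftot B Rs F,
      P4Feas U D ρ ζ Rfun Treq Btot RStot Ftot B Rs F →
      ∃ Btot' RStot' Ftot' B' Rs' F',
        P4Feas U D ρ ζ Rfun Treq Btot' RStot' Ftot' B' Rs' F' ∧
        (∀ u, B' u = Rinv u (D u / Treq)) ∧
        Btot' = (∑ u, Rinv u (D u / Treq)) ∧
        J4 a1 a2 a3 Btot' RStot' Ftot' ≤ J4 a1 a2 a3 Btot RStot Ftot) ∧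
    ((∃ Btot RStot Ftot B Rs F,
        P4Feas U D ρ ζ Rfun Treq Btot RStot Ftot B Rs F ∧
        ∀ Btot' RStot' Ftot' B' Rs' F',
          P4Feas U D ρ ζ Rfun Treq Btot' RStot' Ftot' B' Rs' F' →
          J4 a1 a2 a3 Btot RStot Ftot ≤ J4 a1 a2 a3 Btot' RStot' Ftot') →
      (∃ Btot RStot Ftot B Rs F,
        P4Feas U D ρ ζ Rfun Treq Btot RStot Ftot B Rs F ∧
        (∀ u, B u = Rinv u (D u / Treq)) ∧
        Btot = (∑ u, Rinv u (D u / Treq)) ∧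
        ∀ Btot' RStot' Ftot' B' Rs' F',
          P4Feas U D ρ ζ Rfun Treq Btot' RStot' Ftot' B' Rs' F' →
          J4 a1 a2 a3 Btot RStot Ftot ≤ J4 a1 a2 a3 Btot' RStot' Ftot')) := by
  have hd u : 0 < D u / Treq := div_pos (hD u) hTreq
  refine ⟨fun Btot RStot Ftot B Rs F h => ?_, fun ⟨Btot, RStot, Ftot, B, Rs, F, h, hmin⟩ => ?_⟩
  · obtain ⟨hfeas, hBtot⟩ := h.rescale_to_demand hd hmono hinv_right hinv_nonneg
    exact ⟨_, _, _, _, _, _, hfeas, fun _ => rfl, rfl, J4_le_J4_of_le ha1 hBtot⟩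
  · obtain ⟨hfeas, hBtot⟩ := h.rescale_to_demand hd hmono hinv_right hinv_nonneg
    exact ⟨_, _, _, _, _, _, hfeas, fun _ => rfl, rfl, fun _ _ _ _ _ _ h' =>
      (J4_le_J4_of_le ha1 hBtot).trans (hmin _ _ _ _ _ _ h')⟩

/-- For every (P4)-feasible point there is a (P4)-feasible point with
`B_u' = R_u⁻¹(D_u/T_req)` and `Btot' = Σ_u R_u⁻¹(D_u/T_req)` and no larger cost; in
particular a minimizer of (P4), if one exists, can be taken of this form. -/
theorem p4_optimal_bandwidth
    (U : ℕ) (hU : 1 ≤ U)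
    (D ρ ζ : Fin U → ℝ) (hD : ∀ u, 0 < D u) (hρ : ∀ u, 0 < ρ u)
    (hζ : ∀ u, ζ u ∈ Set.Ioo (0:ℝ) 1)
    (Rfun Rinv : Fin U → ℝ → ℝ)
    (hmono : ∀ u, StrictMonoOn (Rfun u) (Set.Ici 0))
    (hcont : ∀ u, ContinuousOn (Rfun u) (Set.Ici 0))
    (hbij : ∀ u, Set.BijOn (Rfun u) (Set.Ici 0) (Set.Ici 0))
    (hinv_left : ∀ u b, 0 ≤ b → Rinv u (Rfun u b) = b)
    (hinv_right : ∀ u x, 0 ≤ x → Rfun u (Rinv u x) = x)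
    (hinv_nonneg : ∀ u x, 0 ≤ x → 0 ≤ Rinv u x)
    (a1 a2 a3 Treq : ℝ) (ha1 : 0 ≤ a1) (ha2 : 0 ≤ a2) (ha3 : 0 ≤ a3) (hTreq : 0 < Treq) :
    (∀ Btot RStot Ftot B Rs F,
      P4Feas U D ρ ζ Rfun Treq Btot RStot Ftot B Rs F →
      ∃ Btot' RStot' Ftot' B' Rs' F',
        P4Feas U D ρ ζ Rfun Treq Btot' RStot' Ftot' B' Rs' F' ∧
        (∀ u, B' u = Rinv u (D u / Treq)) ∧
        Btot' = (∑ u, Rinv u (D u / Treq)) ∧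
        J4 a1 a2 a3 Btot' RStot' Ftot' ≤ J4 a1 a2 a3 Btot RStot Ftot) ∧
    ((∃ Btot RStot Ftot B Rs F,
        P4Feas U D ρ ζ Rfun Treq Btot RStot Ftot B Rs F ∧
        ∀ Btot' RStot' Ftot' B' Rs' F',
          P4Feas U D ρ ζ Rfun Treq Btot' RStot' Ftot' B' Rs' F' →
          J4 a1 a2 a3 Btot RStot Ftot ≤ J4 a1 a2 a3 Btot' RStot' Ftot') →
      (∃ Btot RStot Ftot B Rs F,
        P4Feas U D ρ ζ Rfun Treq Btot RStot Ftot B Rs F ∧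
        (∀ u, B u = Rinv u (D u / Treq)) ∧
        Btot = (∑ u, Rinv u (D u / Treq)) ∧
        ∀ Btot' RStot' Ftot' B' Rs' F',
          P4Feas U D ρ ζ Rfun Treq Btot' RStot' Ftot' B' Rs' F' →
          J4 a1 a2 a3 Btot RStot Ftot ≤ J4 a1 a2 a3 Btot' RStot' Ftot')) :=
  p4_optimal_bandwidth_general U D ρ ζ hD Rfun Rinv hmono hinv_right hinv_nonneg a1 a2 a3 Treq ha1
    hTreq

end
end

section
/- Let x = (Btot, RStot, Ftot, (B_u), (Rs_u), (F_u)) be (P4)-feasible, and for each u set s_u = (D_u/T_req)/R_u(B_u), B_u' = R_u⁻¹(D_u/T_req), Rs_u' = s_u·Rs_u, F_u' = s_u·F_u, and define Btot' = Σ_u B_u', RStot' = Σ_u Rs_u', Ftot' = Σ_u F_u'. Then x' = (Btot', RStot', Ftot', (B_u'), (Rs_u'), (F_u')) is (P4)-feasible; moreover B_u' ≤ B_u, Rs_u' ≤ Rs_u and F_u' ≤ F_u for every u, Btot' ≤ Btot, RStot' ≤ RStot, Ftot' ≤ Ftot, and hence J4(x') ≤ J4(x). -/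
noncomputable section

/-!
Proof idea: the scaled point has rate exactly `D_u/T_req` for every user, so its bandwidth is
`R_u⁻¹(D_u/T_req) ≤ B_u` by monotonicity of `R_u`. The per-user constraints
`Rs_u ≤ R_u ≤ Rs_u/ζ_u` and `F_u = ρ_u(R_u − Rs_u)/(1−ζ_u)` are homogeneous in `(R_u, Rs_u, F_u)`,
so they survive multiplication by `s_u ∈ (0, 1]`, which also shrinks `Rs_u` and `F_u`.
Summing and using `a_i ≥ 0` gives the bounds on totals and cost.
-/

theorem J4_mono {a1 a2 a3 Btot RStot Ftot Btot' RStot' Ftot' : ℝ}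
    (ha1 : 0 ≤ a1) (ha2 : 0 ≤ a2) (ha3 : 0 ≤ a3)
    (hB : Btot' ≤ Btot) (hRS : RStot' ≤ RStot) (hF : Ftot' ≤ Ftot) :
    J4 a1 a2 a3 Btot' RStot' Ftot' ≤ J4 a1 a2 a3 Btot RStot Ftot := by
  unfold J4
  gcongr

theorem p4Feas_of_sum_totals {U : ℕ} {D ρ ζ : Fin U → ℝ} {Rfun : Fin U → ℝ → ℝ} {Treq : ℝ}
    {B Rs F : Fin U → ℝ} (hB : ∀ u, 0 ≤ B u) (hRs : ∀ u, 0 < Rs u) (hF : ∀ u, 0 ≤ F u)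
    (hlat : ∀ u, D u / Treq ≤ Rfun u (B u))
    (hsplit : ∀ u, Rs u ≤ Rfun u (B u) ∧ Rfun u (B u) ≤ Rs u / ζ u)
    (hload : ∀ u, F u = ρ u * (Rfun u (B u) - Rs u) / (1 - ζ u)) :
    P4Feas U D ρ ζ Rfun Treq (∑ u, B u) (∑ u, Rs u) (∑ u, F u) B Rs F :=
  ⟨Finset.sum_nonneg fun u _ => hB u, Finset.sum_nonneg fun u _ => (hRs u).le,
    Finset.sum_nonneg fun u _ => hF u, hB, hRs, hF, hlat, hsplit, hload, le_rfl, le_rfl, le_rfl⟩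

theorem rate_split_smul {s r rs ζ : ℝ} (hs : 0 ≤ s) (h : rs ≤ r ∧ r ≤ rs / ζ) :
    s * rs ≤ s * r ∧ s * r ≤ s * rs / ζ :=
  ⟨mul_le_mul_of_nonneg_left h.1 hs,
    (mul_le_mul_of_nonneg_left h.2 hs).trans_eq (mul_div_assoc _ _ _).symm⟩

theorem load_smul (s ρ ζ r rs : ℝ) :
    s * (ρ * (r - rs) / (1 - ζ)) = ρ * (s * r - s * rs) / (1 - ζ) := by
  ring

theorem sum_le_of_le_of_sum_le {ι : Type*} {t : Finset ι} {f g : ι → ℝ} {c : ℝ}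
    (hfg : ∀ i, f i ≤ g i) (hg : ∑ i ∈ t, g i ≤ c) : ∑ i ∈ t, f i ≤ c :=
  (Finset.sum_le_sum fun i _ => hfg i).trans hg

theorem p4_scaling_feasible_general
    (U : ℕ)
    (D ρ ζ : Fin U → ℝ) (hD : ∀ u, 0 < D u)
    (Rfun Rinv : Fin U → ℝ → ℝ)
    (hmono : ∀ u, StrictMonoOn (Rfun u) (Set.Ici 0))
    (hinv_right : ∀ u x, 0 ≤ x → Rfun u (Rinv u x) = x)
    (hinv_nonneg : ∀ u x, 0 ≤ x → 0 ≤ Rinv u x)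
    (a1 a2 a3 Treq : ℝ) (ha1 : 0 ≤ a1) (ha2 : 0 ≤ a2) (ha3 : 0 ≤ a3) (hTreq : 0 < Treq)
    (Btot RStot Ftot : ℝ) (B Rs F : Fin U → ℝ)
    (hfeas : P4Feas U D ρ ζ Rfun Treq Btot RStot Ftot B Rs F)
    (s B' Rs' F' : Fin U → ℝ) (Btot' RStot' Ftot' : ℝ)
    (hs : ∀ u, s u = (D u / Treq) / Rfun u (B u))
    (hB' : ∀ u, B' u = Rinv u (D u / Treq))
    (hRs' : ∀ u, Rs' u = s u * Rs u)
    (hF' : ∀ u, F' u = s u * F u)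
    (hBtot' : Btot' = ∑ u, B' u)
    (hRStot' : RStot' = ∑ u, Rs' u)
    (hFtot' : Ftot' = ∑ u, F' u) :
    P4Feas U D ρ ζ Rfun Treq Btot' RStot' Ftot' B' Rs' F' ∧
    (∀ u, B' u ≤ B u ∧ Rs' u ≤ Rs u ∧ F' u ≤ F u) ∧
    Btot' ≤ Btot ∧ RStot' ≤ RStot ∧ Ftot' ≤ Ftot ∧
    J4 a1 a2 a3 Btot' RStot' Ftot' ≤ J4 a1 a2 a3 Btot RStot Ftot := by
  obtain ⟨-, -, -, hB, hRs, hF, hlat, hsplit, hload, hBsum, hRSsum, hFsum⟩ := hfeas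
  have hd u : 0 < D u / Treq := div_pos (hD u) hTreq
  have hR u : 0 < Rfun u (B u) := (hd u).trans_le (hlat u)
  have hs_pos u : 0 < s u := hs u ▸ div_pos (hd u) (hR u)
  have hs_le u : s u ≤ 1 := hs u ▸ div_le_one_of_le₀ (hlat u) (hR u).le
  have hR' u : Rfun u (B' u) = D u / Treq := hB' u ▸ hinv_right u _ (hd u).le
  have hR'_eq_smul u : Rfun u (B' u) = s u * Rfun u (B u) := by
    rw [hR', hs, div_mul_cancel₀ _ (hR u).ne']
  have hB'_nonneg u : 0 ≤ B' u := hB' u ▸ hinv_nonneg u _ (hd u).le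
  have hB'_le u : B' u ≤ B u :=
    ((hmono u).le_iff_le (hB'_nonneg u) (hB u)).1 (hR' u ▸ hlat u)
  have hRs'_le u : Rs' u ≤ Rs u := hRs' u ▸ mul_le_of_le_one_left (hRs u).le (hs_le u)
  have hF'_le u : F' u ≤ F u := hF' u ▸ mul_le_of_le_one_left (hF u) (hs_le u)
  have hBtot'_le : Btot' ≤ Btot := hBtot' ▸ sum_le_of_le_of_sum_le hB'_le hBsum
  have hRStot'_le : RStot' ≤ RStot := hRStot' ▸ sum_le_of_le_of_sum_le hRs'_le hRSsum
  have hFtot'_le : Ftot' ≤ Ftot := hFtot' ▸ sum_le_of_le_of_sum_le hF'_le hFsum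
  refine ⟨?_, fun u => ⟨hB'_le u, hRs'_le u, hF'_le u⟩, hBtot'_le, hRStot'_le, hFtot'_le,
    J4_mono ha1 ha2 ha3 hBtot'_le hRStot'_le hFtot'_le⟩
  subst hBtot' hRStot' hFtot'
  refine p4Feas_of_sum_totals hB'_nonneg (fun u => hRs' u ▸ mul_pos (hs_pos u) (hRs u))
    (fun u => hF' u ▸ mul_nonneg (hs_pos u).le (hF u)) (fun u => (hR' u).ge) (fun u => ?_)
    (fun u => ?_)
  · rw [hRs', hR'_eq_smul]
    exact rate_split_smul (hs_pos u).le (hsplit u)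
  · rw [hF', hRs', hR'_eq_smul, hload, load_smul]

/-- Scaling a (P4)-feasible point by `s_u = (D_u/T_req)/R_u(B_u)` yields a (P4)-feasible
point that is componentwise no larger and has no larger cost. -/
theorem p4_scaling_feasible
    (U : ℕ) (hU : 1 ≤ U)
    (D ρ ζ : Fin U → ℝ) (hD : ∀ u, 0 < D u) (hρ : ∀ u, 0 < ρ u)
    (hζ : ∀ u, ζ u ∈ Set.Ioo (0:ℝ) 1)
    (Rfun Rinv : Fin U → ℝ → ℝ)
    (hmono : ∀ u, StrictMonoOn (Rfun u) (Set.Ici 0))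
    (hcont : ∀ u, ContinuousOn (Rfun u) (Set.Ici 0))
    (hbij : ∀ u, Set.BijOn (Rfun u) (Set.Ici 0) (Set.Ici 0))
    (hinv_left : ∀ u b, 0 ≤ b → Rinv u (Rfun u b) = b)
    (hinv_right : ∀ u x, 0 ≤ x → Rfun u (Rinv u x) = x)
    (hinv_nonneg : ∀ u x, 0 ≤ x → 0 ≤ Rinv u x)
    (a1 a2 a3 Treq : ℝ) (ha1 : 0 ≤ a1) (ha2 : 0 ≤ a2) (ha3 : 0 ≤ a3) (hTreq : 0 < Treq)
    (Btot RStot Ftot : ℝ) (B Rs F : Fin U → ℝ)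
    (hfeas : P4Feas U D ρ ζ Rfun Treq Btot RStot Ftot B Rs F)
    (s B' Rs' F' : Fin U → ℝ) (Btot' RStot' Ftot' : ℝ)
    (hs : ∀ u, s u = (D u / Treq) / Rfun u (B u))
    (hB' : ∀ u, B' u = Rinv u (D u / Treq))
    (hRs' : ∀ u, Rs' u = s u * Rs u)
    (hF' : ∀ u, F' u = s u * F u)
    (hBtot' : Btot' = ∑ u, B' u)
    (hRStot' : RStot' = ∑ u, Rs' u)
    (hFtot' : Ftot' = ∑ u, F' u) :
    P4Feas U D ρ ζ Rfun Treq Btot' RStot' Ftot' B' Rs' F' ∧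
    (∀ u, B' u ≤ B u ∧ Rs' u ≤ Rs u ∧ F' u ≤ F u) ∧
    Btot' ≤ Btot ∧ RStot' ≤ RStot ∧ Ftot' ≤ Ftot ∧
    J4 a1 a2 a3 Btot' RStot' Ftot' ≤ J4 a1 a2 a3 Btot RStot Ftot :=
  p4_scaling_feasible_general U D ρ ζ hD Rfun Rinv hmono hinv_right hinv_nonneg a1 a2 a3 Treq ha1
    ha2 ha3 hTreq Btot RStot Ftot B Rs F hfeas s B' Rs' F' Btot' RStot' Ftot' hs hB' hRs' hF' hBtot'
    hRStot' hFtot'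

end
end

section
/- Define, for every u, Rs_u* = (D_u/T_req)·(1 − (1−ζ_u)·I(ρ_u/(1−ζ_u) ≤ a2/a3)), and set RStot* = Σ_u Rs_u* and Ftot* = Σ_u ρ_u·(D_u/T_req)·I(ρ_u/(1−ζ_u) ≤ a2/a3). Then the point (RStot*, Ftot*, (Rs_u*)) is feasible for problem (P5), and for every feasible point (RStot, Ftot, (Rs_u)) of (P5) one has a2·RStot* + a3·Ftot* ≤ a2·RStot + a3·Ftot; that is, this point is an optimal solution of (P5). -/
/-!
(P5) separates over users: once `Rs_u` is fixed, the two budget constraints are cheapest when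
tight, so user `u` contributes `a2·Rs_u + a3·ρ_u(d_u − Rs_u)/(1−ζ_u)` with `d_u = D_u/T_req`.
This is affine in `Rs_u` with slope `a2 − a3·ρ_u/(1−ζ_u)`, hence minimised over
`[ζ_u d_u, d_u]` at the left end when `ρ_u/(1−ζ_u) ≤ a2/a3` and at the right end otherwise,
which is exactly `Rs_u*`.
-/

def P5Feas (U : ℕ) (D ρ ζ : Fin U → ℝ) (Treq : ℝ)
    (RStot Ftot : ℝ) (Rs : Fin U → ℝ) : Prop :=
  (∑ u, Rs u) ≤ RStot ∧
  (∑ u, ρ u * (D u / Treq - Rs u) / (1 - ζ u)) ≤ Ftot ∧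
  (∀ u, ζ u * D u / Treq ≤ Rs u ∧ Rs u ≤ D u / Treq) ∧
  0 ≤ RStot ∧ 0 ≤ Ftot

namespace P5

noncomputable def thresholdIndicator (a2 a3 ρ ζ : ℝ) : ℝ := if ρ / (1 - ζ) ≤ a2 / a3 then 1 else 0

noncomputable def thresholdRate (a2 a3 ρ ζ d : ℝ) : ℝ :=
  d * (1 - (1 - ζ) * thresholdIndicator a2 a3 ρ ζ)

/-- The objective contribution of one user when its share of the `Ftot` constraint is tight. -/
noncomputable def userCost (a2 a3 ρ ζ d r : ℝ) : ℝ := a2 * r + a3 * (ρ * (d - r) / (1 - ζ))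

variable {a2 a3 ρ ζ d : ℝ}

lemma userCost_sub_userCost (r s : ℝ) :
    userCost a2 a3 ρ ζ d r - userCost a2 a3 ρ ζ d s = (r - s) * (a2 - a3 * ρ / (1 - ζ)) := by
  unfold userCost; ring

lemma thresholdRate_of_le (h : ρ / (1 - ζ) ≤ a2 / a3) : thresholdRate a2 a3 ρ ζ d = ζ * d := by
  simp only [thresholdRate, thresholdIndicator, if_pos h]; ring

lemma thresholdRate_of_lt (h : a2 / a3 < ρ / (1 - ζ)) : thresholdRate a2 a3 ρ ζ d = d := by
  simp only [thresholdRate, thresholdIndicator, if_neg h.not_ge]; ring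

lemma thresholdIndicator_nonneg : 0 ≤ thresholdIndicator a2 a3 ρ ζ := by
  unfold thresholdIndicator; split_ifs <;> norm_num

lemma compute_thresholdRate (hζ : ζ ≠ 1) :
    ρ * (d - thresholdRate a2 a3 ρ ζ d) / (1 - ζ) = ρ * d * thresholdIndicator a2 a3 ρ ζ := by
  have : 1 - ζ ≠ 0 := sub_ne_zero.2 hζ.symm
  unfold thresholdRate; field_simp; ring

lemma thresholdRate_mem_Icc (hd : 0 ≤ d) (hζ : ζ ≤ 1) :
    ζ * d ≤ thresholdRate a2 a3 ρ ζ d ∧ thresholdRate a2 a3 ρ ζ d ≤ d := by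
  rcases le_or_gt (ρ / (1 - ζ)) (a2 / a3) with h | h
  · rw [thresholdRate_of_le h]; exact ⟨le_rfl, mul_le_of_le_one_left hd hζ⟩
  · rw [thresholdRate_of_lt h]; exact ⟨mul_le_of_le_one_left hd hζ, le_rfl⟩

lemma userCost_thresholdRate_le (ha3 : 0 < a3) {r : ℝ}
    (hr : ζ * d ≤ r ∧ r ≤ d) :
    userCost a2 a3 ρ ζ d (thresholdRate a2 a3 ρ ζ d) ≤ userCost a2 a3 ρ ζ d r := by
  rw [← sub_nonneg, userCost_sub_userCost]
  rcases le_or_gt (ρ / (1 - ζ)) (a2 / a3) with h | h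
  · have hslope : 0 ≤ a2 - a3 * ρ / (1 - ζ) := by
      rw [sub_nonneg, mul_div_assoc, ← le_div_iff₀' ha3]; exact h
    rw [thresholdRate_of_le h]
    exact mul_nonneg (sub_nonneg.2 hr.1) hslope
  · have hslope : a2 - a3 * ρ / (1 - ζ) < 0 := by
      rw [sub_neg, mul_div_assoc, ← div_lt_iff₀' ha3]; exact h
    rw [thresholdRate_of_lt h]
    exact mul_nonneg_of_nonpos_of_nonpos (sub_nonpos.2 hr.2) hslope.le

end P5

open P5 Finset in
theorem p5_optimal_solution_general
    (U : ℕ)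
    (D ρ ζ : Fin U → ℝ) (hD : ∀ u, 0 < D u) (hρ : ∀ u, 0 < ρ u)
    (hζ : ∀ u, ζ u ∈ Set.Ioo (0:ℝ) 1)
    (a2 a3 Treq : ℝ) (ha2 : 0 < a2) (ha3 : 0 < a3) (hTreq : 0 < Treq) :
    P5Feas U D ρ ζ Treq
      (∑ u, (D u / Treq) *
        (1 - (1 - ζ u) * (if ρ u / (1 - ζ u) ≤ a2 / a3 then (1:ℝ) else 0)))
      (∑ u, ρ u * (D u / Treq) * (if ρ u / (1 - ζ u) ≤ a2 / a3 then (1:ℝ) else 0))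
      (fun u => (D u / Treq) *
        (1 - (1 - ζ u) * (if ρ u / (1 - ζ u) ≤ a2 / a3 then (1:ℝ) else 0))) ∧
    (∀ RStot Ftot Rs, P5Feas U D ρ ζ Treq RStot Ftot Rs →
      a2 * (∑ u, (D u / Treq) *
          (1 - (1 - ζ u) * (if ρ u / (1 - ζ u) ≤ a2 / a3 then (1:ℝ) else 0))) +
        a3 * (∑ u, ρ u * (D u / Treq) * (if ρ u / (1 - ζ u) ≤ a2 / a3 then (1:ℝ) else 0)) ≤
      a2 * RStot + a3 * Ftot) := by
  have hd u : 0 ≤ D u / Treq := (div_pos (hD u) hTreq).le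
  have hζ1 u : ζ u < 1 := (hζ u).2
  have hbounds u := thresholdRate_mem_Icc (a2 := a2) (a3 := a3) (ρ := ρ u) (hd u) (hζ1 u).le
  have hcompute u := compute_thresholdRate (a2 := a2) (a3 := a3) (ρ := ρ u) (d := D u / Treq)
    (hζ1 u).ne
  refine ⟨⟨le_rfl, (sum_congr rfl fun u _ => hcompute u).le, fun u => by
    rw [mul_div_assoc]; exact hbounds u, ?_, ?_⟩, ?_⟩
  · exact sum_nonneg fun u _ => (mul_nonneg (hζ u).1.le (hd u)).trans (hbounds u).1
  · exact sum_nonneg fun u _ =>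
      mul_nonneg (mul_nonneg (hρ u).le (hd u)) thresholdIndicator_nonneg
  rintro RStot Ftot Rs ⟨hRStot, hFtot, hRs, -, -⟩
  calc _ = ∑ u, userCost a2 a3 (ρ u) (ζ u) (D u / Treq)
          (thresholdRate a2 a3 (ρ u) (ζ u) (D u / Treq)) := by
        simp only [userCost, hcompute, mul_sum, ← sum_add_distrib]; rfl
    _ ≤ ∑ u, userCost a2 a3 (ρ u) (ζ u) (D u / Treq) (Rs u) := sum_le_sum fun u _ =>
        userCost_thresholdRate_le ha3 (by rw [← mul_div_assoc]; exact hRs u)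
    _ = a2 * ∑ u, Rs u + a3 * ∑ u, ρ u * (D u / Treq - Rs u) / (1 - ζ u) := by
        simp only [userCost, mul_sum, ← sum_add_distrib]
    _ ≤ a2 * RStot + a3 * Ftot := by gcongr

/-- The threshold-based point `Rs_u* = (D_u/T_req)(1 − (1−ζ_u)·I(ρ_u/(1−ζ_u) ≤ a2/a3))`,
`RStot* = Σ_u Rs_u*`, `Ftot* = Σ_u ρ_u(D_u/T_req)·I(ρ_u/(1−ζ_u) ≤ a2/a3)` is an optimal
solution of (P5). -/
theorem p5_optimal_solution
    (U : ℕ) (hU : 1 ≤ U)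
    (D ρ ζ : Fin U → ℝ) (hD : ∀ u, 0 < D u) (hρ : ∀ u, 0 < ρ u)
    (hζ : ∀ u, ζ u ∈ Set.Ioo (0:ℝ) 1)
    (a2 a3 Treq : ℝ) (ha2 : 0 < a2) (ha3 : 0 < a3) (hTreq : 0 < Treq) :
    P5Feas U D ρ ζ Treq
      (∑ u, (D u / Treq) *
        (1 - (1 - ζ u) * (if ρ u / (1 - ζ u) ≤ a2 / a3 then (1:ℝ) else 0)))
      (∑ u, ρ u * (D u / Treq) * (if ρ u / (1 - ζ u) ≤ a2 / a3 then (1:ℝ) else 0))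
      (fun u => (D u / Treq) *
        (1 - (1 - ζ u) * (if ρ u / (1 - ζ u) ≤ a2 / a3 then (1:ℝ) else 0))) ∧
    (∀ RStot Ftot Rs, P5Feas U D ρ ζ Treq RStot Ftot Rs →
      a2 * (∑ u, (D u / Treq) *
          (1 - (1 - ζ u) * (if ρ u / (1 - ζ u) ≤ a2 / a3 then (1:ℝ) else 0))) +
        a3 * (∑ u, ρ u * (D u / Treq) * (if ρ u / (1 - ζ u) ≤ a2 / a3 then (1:ℝ) else 0)) ≤
      a2 * RStot + a3 * Ftot) :=
  p5_optimal_solution_general U D ρ ζ hD hρ hζ a2 a3 Treq ha2 ha3 hTreq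
end

section
/- If a (P8)-feasible point (h_x, h_y, (B_u), (ν_u), (Q_u), (Pr_u), (θ_u)) minimizes Σ_u B_u over all (P8)-feasible points, then at this point all five constraints (b)–(f) hold with equality for every u: 2·log ν_u + 1/ν_u − 1 = D_u·log 2/(T_req·B_u); ν_u(ν_u − 1) = (p_u/σ²)·(c/(4πf))²·10^(((η_NLoS − η_LoS)·Pr_u − η_NLoS)/10)/Q_u; Q_u = (h_x − hx_u)² + (h_y − hy_u)² + H²; 1/Pr_u = 1 + a·exp(−b·(θ_u − a)); and sin θ_u = H/√Q_u. -/
noncomputable section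

/-- A point of problem (P8): per-user positivity/range conditions. -/
def P8Point (U : ℕ) (B ν Q Pr θ : Fin U → ℝ) : Prop :=
  (∀ u, 0 < B u) ∧ (∀ u, 1 < ν u) ∧ (∀ u, 0 < Q u) ∧
  (∀ u, Pr u ∈ Set.Ioc (0:ℝ) 1) ∧ (∀ u, θ u ∈ Set.Icc (0:ℝ) (Real.pi / 2))

/-- Feasibility for problem (P8): constraints (b)-(f). -/
def P8Feas (U : ℕ) (D p gx gy : Fin U → ℝ)
    (σ2 f c H Treq a b ηLoS ηNLoS : ℝ)
    (hx hy : ℝ) (B ν Q Pr θ : Fin U → ℝ) : Prop :=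
  P8Point U B ν Q Pr θ ∧
  (∀ u, D u * Real.log 2 / (Treq * B u) ≤ 2 * Real.log (ν u) + 1 / ν u - 1) ∧
  (∀ u, ν u * (ν u - 1) ≤
    (p u / σ2) * (c / (4 * Real.pi * f)) ^ 2 *
      (10:ℝ) ^ (((ηNLoS - ηLoS) * Pr u - ηNLoS) / 10) / Q u) ∧
  (∀ u, (hx - gx u) ^ 2 + (hy - gy u) ^ 2 + H ^ 2 ≤ Q u) ∧
  (∀ u, 1 + a * Real.exp (-b * (θ u - a)) ≤ 1 / Pr u) ∧
  (∀ u, Real.sin (θ u) ≤ H / Real.sqrt (Q u))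

/-!
At an optimum the other users are irrelevant to user `u`: replacing the variables of `u` alone by
any other values feasible for `u` keeps the point feasible, so `B_u` is the least bandwidth feasible
for user `u` with the hub position fixed. The constraints are then tightened along the chain
(f) → (e) → (c) → (b) and (d) → (c) → (b). Slack in (f) allows a larger elevation angle `θ_u`,
which lowers the right side of (e) and leaves room for a larger LoS probability `Pr_u`. A larger
`Pr_u`, or a smaller `Q_u` when (d) is slack, raises the right side of (c), so `ν_u` can grow.
As `ν ↦ 2 log ν + 1/ν - 1` is increasing, that makes (b) slack, and slack in (b) allows a smaller
`B_u`.
-/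

open Real Set

theorem strictMonoOn_two_mul_log_add_one_div_sub_one :
    StrictMonoOn (fun x : ℝ => 2 * log x + 1 / x - 1) (Ici (1 / 2)) := by
  intro x hx y hy hxy
  simp only [mem_Ici] at hx hy
  have hx0 : 0 < x := by linarith
  have hy0 : 0 < y := by linarith
  have hlog : log (x / y) < x / y - 1 :=
    log_lt_sub_one_of_pos (div_pos hx0 hy0) (div_ne_one_of_ne hxy.ne)
  rw [log_div hx0.ne' hy0.ne'] at hlog
  have hgap : 2 * (1 - x / y) + 1 / y - 1 / x = (y - x) * (2 * x - 1) / (x * y) := by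
    field_simp
    ring
  have hgap_nonneg : 0 ≤ (y - x) * (2 * x - 1) / (x * y) := by
    apply div_nonneg (mul_nonneg _ _) (by positivity) <;> linarith
  simp only
  linarith

theorem two_mul_log_add_one_div_sub_one_pos {x : ℝ} (hx : 1 < x) :
    0 < 2 * log x + 1 / x - 1 := by
  simpa using strictMonoOn_two_mul_log_add_one_div_sub_one
    (mem_Ici.2 (by norm_num : (1 / 2 : ℝ) ≤ 1)) (mem_Ici.2 (by linarith)) hx

theorem exists_gt_mul_sub_one_eq {ν R : ℝ} (hν : 1 / 2 ≤ ν) (hR : ν * (ν - 1) < R) :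
    ∃ ν', ν < ν' ∧ ν' * (ν' - 1) = R := by
  have hs : √(1 + 4 * R) ^ 2 = 1 + 4 * R := sq_sqrt (by nlinarith)
  have hs0 : 0 ≤ √(1 + 4 * R) := sqrt_nonneg _
  refine ⟨(1 + √(1 + 4 * R)) / 2, ?_, by linear_combination hs / 4⟩
  by_contra! hle
  nlinarith [mul_nonneg (sub_nonneg.2 hle) (by linarith : 0 ≤ ν + (1 + √(1 + 4 * R)) / 2 - 1)]

/-- The constraints of (P8) for one user with the hub position fixed; `K` stands for the gain
`(p_u/σ²)·(c/(4πf))²` and `r2` for the squared horizontal distance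
`(h_x - hx_u)² + (h_y - hy_u)²`. -/
def P8UserFeas (D K r2 H Treq a b ηLoS ηNLoS B ν Q Pr θ : ℝ) : Prop :=
  0 < B ∧ 1 < ν ∧ 0 < Q ∧ Pr ∈ Ioc (0 : ℝ) 1 ∧ θ ∈ Icc (0 : ℝ) (π / 2) ∧
  D * log 2 / (Treq * B) ≤ 2 * log ν + 1 / ν - 1 ∧
  ν * (ν - 1) ≤ K * (10 : ℝ) ^ (((ηNLoS - ηLoS) * Pr - ηNLoS) / 10) / Q ∧
  r2 + H ^ 2 ≤ Q ∧
  1 + a * exp (-b * (θ - a)) ≤ 1 / Pr ∧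
  sin θ ≤ H / √Q

def P8UserBandwidths (D K r2 H Treq a b ηLoS ηNLoS : ℝ) : Set ℝ :=
  {B | ∃ ν Q Pr θ, P8UserFeas D K r2 H Treq a b ηLoS ηNLoS B ν Q Pr θ}

namespace P8UserFeas

variable {D K r2 H Treq a b ηLoS ηNLoS B ν Q Pr θ : ℝ}

local notation "Feas" => P8UserFeas D K r2 H Treq a b ηLoS ηNLoS
local notation "Bandwidths" => P8UserBandwidths D K r2 H Treq a b ηLoS ηNLoS

theorem gain_pos (h : Feas B ν Q Pr θ) : 0 < K := by
  obtain ⟨-, hν, hQ, -, -, -, hsnr, -⟩ := h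
  have hpos : 0 < K * (10 : ℝ) ^ (((ηNLoS - ηLoS) * Pr - ηNLoS) / 10) / Q :=
    lt_of_lt_of_le (mul_pos (by linarith) (by linarith)) hsnr
  rw [div_pos_iff_of_pos_right hQ] at hpos
  exact pos_of_mul_pos_left hpos (rpow_pos_of_pos (by norm_num) _).le

theorem rate_tight (hD : 0 < D) (hT : 0 < Treq) (h : Feas B ν Q Pr θ)
    (hmin : B ∈ lowerBounds Bandwidths) :
    2 * log ν + 1 / ν - 1 = D * log 2 / (Treq * B) := by
  obtain ⟨hB, hν, hQ, hPr, hθ, hrate, hsnr, hdist, hlos, helev⟩ := h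
  refine (hrate.eq_of_not_lt fun hlt => ?_).symm
  have hg := two_mul_log_add_one_div_sub_one_pos hν
  have hlog2 : 0 < log 2 := log_pos one_lt_two
  have h' : Feas (D * log 2 / (Treq * (2 * log ν + 1 / ν - 1))) ν Q Pr θ := by
    refine ⟨by positivity, hν, hQ, hPr, hθ, le_of_eq ?_, hsnr, hdist, hlos, helev⟩
    generalize 2 * log ν + 1 / ν - 1 = g at hg ⊢
    field_simp
  have hlt' : D * log 2 / (Treq * (2 * log ν + 1 / ν - 1)) < B := by
    rw [div_lt_iff₀ (mul_pos hT hB)] at hlt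
    rw [div_lt_iff₀ (mul_pos hT hg)]
    linarith
  exact (hmin ⟨ν, Q, Pr, θ, h'⟩).not_gt hlt'

theorem snr_tight (hD : 0 < D) (hT : 0 < Treq) (h : Feas B ν Q Pr θ)
    (hmin : B ∈ lowerBounds Bandwidths) :
    ν * (ν - 1) = K * (10 : ℝ) ^ (((ηNLoS - ηLoS) * Pr - ηNLoS) / 10) / Q := by
  obtain ⟨hB, hν, hQ, hPr, hθ, hrate, hsnr, hdist, hlos, helev⟩ := h
  refine hsnr.eq_of_not_lt fun hlt => ?_
  obtain ⟨ν', hνν', hν'⟩ := exists_gt_mul_sub_one_eq (by linarith) hlt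
  have hg : 2 * log ν + 1 / ν - 1 < 2 * log ν' + 1 / ν' - 1 :=
    strictMonoOn_two_mul_log_add_one_div_sub_one (mem_Ici.2 (by linarith))
      (mem_Ici.2 (by linarith)) hνν'
  have h' : Feas B ν' Q Pr θ :=
    ⟨hB, hν.trans hνν', hQ, hPr, hθ, hrate.trans hg.le, hν'.le, hdist, hlos, helev⟩
  have := h'.rate_tight hD hT hmin
  linarith

theorem distance_tight (hD : 0 < D) (hT : 0 < Treq) (hH : 0 < H) (hr2 : 0 ≤ r2)
    (h : Feas B ν Q Pr θ) (hmin : B ∈ lowerBounds Bandwidths) : Q = r2 + H ^ 2 := by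
  have hK := h.gain_pos
  obtain ⟨hB, hν, hQ, hPr, hθ, hrate, hsnr, hdist, hlos, helev⟩ := h
  refine (hdist.eq_of_not_lt fun hlt => ?_).symm
  have hQ' : 0 < r2 + H ^ 2 := by positivity
  have hsnr_lt : K * (10 : ℝ) ^ (((ηNLoS - ηLoS) * Pr - ηNLoS) / 10) / Q <
      K * (10 : ℝ) ^ (((ηNLoS - ηLoS) * Pr - ηNLoS) / 10) / (r2 + H ^ 2) :=
    div_lt_div_of_pos_left (by positivity) hQ' hlt
  have helev' : H / √Q ≤ H / √(r2 + H ^ 2) :=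
    div_le_div_of_nonneg_left hH.le (sqrt_pos.2 hQ') (sqrt_le_sqrt hlt.le)
  have h' : Feas B ν (r2 + H ^ 2) Pr θ :=
    ⟨hB, hν, hQ', hPr, hθ, hrate, hsnr.trans hsnr_lt.le, le_rfl, hlos, helev.trans helev'⟩
  have := h'.snr_tight hD hT hmin
  linarith

theorem los_tight (hD : 0 < D) (hT : 0 < Treq) (ha : 0 ≤ a) (hη : ηLoS < ηNLoS)
    (h : Feas B ν Q Pr θ) (hmin : B ∈ lowerBounds Bandwidths) :
    1 / Pr = 1 + a * exp (-b * (θ - a)) := by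
  have hK := h.gain_pos
  obtain ⟨hB, hν, hQ, hPr, hθ, hrate, hsnr, hdist, hlos, helev⟩ := h
  refine (hlos.eq_of_not_lt fun hlt => ?_).symm
  set E := 1 + a * exp (-b * (θ - a))
  have hE : 1 ≤ E := le_add_of_nonneg_right (mul_nonneg ha (exp_pos _).le)
  have hPr_lt : Pr < 1 / E := (lt_one_div (by linarith) hPr.1).1 hlt
  have hsnr_lt : K * (10 : ℝ) ^ (((ηNLoS - ηLoS) * Pr - ηNLoS) / 10) / Q <
      K * (10 : ℝ) ^ (((ηNLoS - ηLoS) * (1 / E) - ηNLoS) / 10) / Q := by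
    gcongr
    exact rpow_lt_rpow_of_exponent_lt (by norm_num)
      (by linarith [mul_lt_mul_of_pos_left hPr_lt (sub_pos.2 hη)])
  have h' : Feas B ν Q (1 / E) θ :=
    ⟨hB, hν, hQ, ⟨by positivity, div_le_one_of_le₀ hE (by linarith)⟩, hθ, hrate,
      hsnr.trans hsnr_lt.le, hdist, (one_div_one_div E).ge, helev⟩
  have := h'.snr_tight hD hT hmin
  linarith

theorem elevation_tight (hD : 0 < D) (hT : 0 < Treq) (ha : 0 < a) (hb : 0 < b)
    (hη : ηLoS < ηNLoS) (hH : 0 ≤ H) (hr2 : 0 ≤ r2) (h : Feas B ν Q Pr θ)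
    (hmin : B ∈ lowerBounds Bandwidths) : sin θ = H / √Q := by
  obtain ⟨hB, hν, hQ, hPr, hθ, hrate, hsnr, hdist, hlos, helev⟩ := h
  refine helev.eq_of_not_lt fun hlt => ?_
  have hs0 : 0 ≤ H / √Q := by positivity
  have hs1 : H / √Q ≤ 1 :=
    div_le_one_of_le₀ ((le_sqrt hH hQ.le).2 (by nlinarith)) (sqrt_nonneg _)
  set θ' := arcsin (H / √Q)
  have hsin : sin θ' = H / √Q := sin_arcsin (by linarith) hs1
  have hθ' : θ' ∈ Icc 0 (π / 2) := ⟨arcsin_nonneg.2 hs0, arcsin_le_pi_div_two _⟩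
  have hθθ' : θ < θ' := by
    refine (strictMonoOn_sin.lt_iff_lt ⟨?_, hθ.2⟩ (arcsin_mem_Icc _)).1 (by rwa [hsin])
    linarith [hθ.1, pi_pos]
  have hlos_lt : 1 + a * exp (-b * (θ' - a)) < 1 + a * exp (-b * (θ - a)) := by
    have : -b * (θ' - a) < -b * (θ - a) := by nlinarith
    gcongr
  have h' : Feas B ν Q Pr θ' :=
    ⟨hB, hν, hQ, hPr, hθ', hrate, hsnr, hdist, hlos_lt.le.trans hlos, hsin.le⟩
  have := h'.los_tight hD hT ha.le hη hmin
  linarith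

theorem constraints_tight (hD : 0 < D) (hT : 0 < Treq) (ha : 0 < a) (hb : 0 < b)
    (hη : ηLoS < ηNLoS) (hH : 0 < H) (hr2 : 0 ≤ r2) (h : Feas B ν Q Pr θ)
    (hmin : B ∈ lowerBounds Bandwidths) :
    2 * log ν + 1 / ν - 1 = D * log 2 / (Treq * B) ∧
      ν * (ν - 1) = K * (10 : ℝ) ^ (((ηNLoS - ηLoS) * Pr - ηNLoS) / 10) / Q ∧
      Q = r2 + H ^ 2 ∧
      1 / Pr = 1 + a * exp (-b * (θ - a)) ∧
      sin θ = H / √Q :=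
  ⟨h.rate_tight hD hT hmin, h.snr_tight hD hT hmin, h.distance_tight hD hT hH hr2 hmin,
    h.los_tight hD hT ha.le hη hmin, h.elevation_tight hD hT ha hb hη hH.le hr2 hmin⟩

end P8UserFeas

theorem p8Feas_iff {U : ℕ} {D p gx gy : Fin U → ℝ} {σ2 f c H Treq a b ηLoS ηNLoS hx hy : ℝ}
    {B ν Q Pr θ : Fin U → ℝ} :
    P8Feas U D p gx gy σ2 f c H Treq a b ηLoS ηNLoS hx hy B ν Q Pr θ ↔
      ∀ u, P8UserFeas (D u) (p u / σ2 * (c / (4 * π * f)) ^ 2)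
            ((hx - gx u) ^ 2 + (hy - gy u) ^ 2) H Treq a b ηLoS ηNLoS
        (B u) (ν u) (Q u) (Pr u) (θ u) := by
  simp only [P8Feas, P8Point, P8UserFeas, forall_and, and_assoc]

theorem P8Feas.update {U : ℕ} {D p gx gy : Fin U → ℝ} {σ2 f c H Treq a b ηLoS ηNLoS hx hy : ℝ}
    {B ν Q Pr θ : Fin U → ℝ} (h : P8Feas U D p gx gy σ2 f c H Treq a b ηLoS ηNLoS hx hy B ν Q Pr θ)
    (u : Fin U) {Bu νu Qu Pru θu : ℝ}
    (hu : P8UserFeas (D u) (p u / σ2 * (c / (4 * π * f)) ^ 2)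
      ((hx - gx u) ^ 2 + (hy - gy u) ^ 2) H Treq a b ηLoS ηNLoS Bu νu Qu Pru θu) :
    P8Feas U D p gx gy σ2 f c H Treq a b ηLoS ηNLoS hx hy (Function.update B u Bu)
      (Function.update ν u νu) (Function.update Q u Qu) (Function.update Pr u Pru)
      (Function.update θ u θu) := by
  rw [p8Feas_iff] at h ⊢
  intro v
  rcases eq_or_ne v u with rfl | hv
  · simpa using hu
  · simpa [hv] using h v

theorem le_of_sum_le_sum_update {ι M : Type*} [Fintype ι] [DecidableEq ι] [AddCommMonoid M]
    [PartialOrder M] [IsOrderedCancelAddMonoid M] {f : ι → M} {i : ι} {x : M}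
    (h : ∑ j, f j ≤ ∑ j, Function.update f i x j) : f i ≤ x := by
  rw [Finset.sum_update_of_mem (Finset.mem_univ i), ← Finset.add_sum_erase _ _ (Finset.mem_univ i),
    Finset.sdiff_singleton_eq_erase] at h
  exact le_of_add_le_add_right h

theorem p8_constraints_tight_at_optimum_general
    (U : ℕ)
    (D p : Fin U → ℝ) (hD : ∀ u, 0 < D u)
    (gx gy : Fin U → ℝ)
    (σ2 f c H Treq a b ηLoS ηNLoS : ℝ)
    (hH : 0 < H) (hTreq : 0 < Treq)
    (ha : 0 < a) (hb : 0 < b) (hη : ηLoS < ηNLoS)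
    (hx hy : ℝ) (B ν Q Pr θ : Fin U → ℝ)
    (hfeas : P8Feas U D p gx gy σ2 f c H Treq a b ηLoS ηNLoS hx hy B ν Q Pr θ)
    (hopt : ∀ hx' hy' B' ν' Q' Pr' θ',
      P8Feas U D p gx gy σ2 f c H Treq a b ηLoS ηNLoS hx' hy' B' ν' Q' Pr' θ' →
      (∑ u, B u) ≤ ∑ u, B' u) :
    ∀ u,
      2 * Real.log (ν u) + 1 / ν u - 1 = D u * Real.log 2 / (Treq * B u) ∧
      ν u * (ν u - 1) =
        (p u / σ2) * (c / (4 * Real.pi * f)) ^ 2 *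
          (10:ℝ) ^ (((ηNLoS - ηLoS) * Pr u - ηNLoS) / 10) / Q u ∧
      Q u = (hx - gx u) ^ 2 + (hy - gy u) ^ 2 + H ^ 2 ∧
      1 / Pr u = 1 + a * Real.exp (-b * (θ u - a)) ∧
      Real.sin (θ u) = H / Real.sqrt (Q u) := by
  intro u
  refine (p8Feas_iff.1 hfeas u).constraints_tight (hD u) hTreq ha hb hη hH (by positivity) ?_
  rintro B' ⟨ν', Q', Pr', θ', h'⟩
  exact le_of_sum_le_sum_update (hopt hx hy _ _ _ _ _ (hfeas.update u h'))

/-- At any (P8)-feasible point minimizing `Σ_u B_u`, all five constraints (b)-(f) hold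
with equality for every user. -/
theorem p8_constraints_tight_at_optimum
    (U : ℕ) (hU : 1 ≤ U)
    (D p : Fin U → ℝ) (hD : ∀ u, 0 < D u) (hp : ∀ u, 0 < p u)
    (gx gy : Fin U → ℝ)
    (σ2 f c H Treq a b ηLoS ηNLoS : ℝ)
    (hσ2 : 0 < σ2) (hf : 0 < f) (hc : 0 < c) (hH : 0 < H) (hTreq : 0 < Treq)
    (ha : 0 < a) (hb : 0 < b) (hη : ηLoS < ηNLoS)
    (hx hy : ℝ) (B ν Q Pr θ : Fin U → ℝ)
    (hfeas : P8Feas U D p gx gy σ2 f c H Treq a b ηLoS ηNLoS hx hy B ν Q Pr θ)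
    (hopt : ∀ hx' hy' B' ν' Q' Pr' θ',
      P8Feas U D p gx gy σ2 f c H Treq a b ηLoS ηNLoS hx' hy' B' ν' Q' Pr' θ' →
      (∑ u, B u) ≤ ∑ u, B' u) :
    ∀ u,
      2 * Real.log (ν u) + 1 / ν u - 1 = D u * Real.log 2 / (Treq * B u) ∧
      ν u * (ν u - 1) =
        (p u / σ2) * (c / (4 * Real.pi * f)) ^ 2 *
          (10:ℝ) ^ (((ηNLoS - ηLoS) * Pr u - ηNLoS) / 10) / Q u ∧
      Q u = (hx - gx u) ^ 2 + (hy - gy u) ^ 2 + H ^ 2 ∧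
      1 / Pr u = 1 + a * Real.exp (-b * (θ u - a)) ∧
      Real.sin (θ u) = H / Real.sqrt (Q u) :=
  p8_constraints_tight_at_optimum_general U D p hD gx gy σ2 f c H Treq a b ηLoS ηNLoS hH hTreq ha hb
    hη hx hy B ν Q Pr θ hfeas hopt

end
end

section
/- Let B ≥ 0 with R(B) > 0, Rs > 0 and F ≥ 0, and define (B', Rs', F') by cases: if R(B) < Rs, set (B', Rs', F') = (B, R(B), 0); if Rs ≤ R(B) < Rs/ζ and F/ρ < (R(B)−Rs)/(1−ζ), set (B', Rs', F') = (R⁻¹(Rs + (1−ζ)F/ρ), Rs, F); if Rs ≤ R(B) < Rs/ζ and F/ρ ≥ (R(B)−Rs)/(1−ζ), set (B', Rs', F') = (B, Rs, ρ(R(B)−Rs)/(1−ζ)); if R(B) ≥ Rs/ζ and F/ρ < Rs/ζ, set (B', Rs', F') = (R⁻¹(Rs + (1−ζ)F/ρ), Rs, F); if R(B) ≥ Rs/ζ and F/ρ ≥ Rs/ζ, set (B', Rs', F') = (R⁻¹(Rs/ζ), Rs, ρRs/ζ). Then B' ≤ B, Rs' ≤ Rs, F' ≤ F; moreover Rs'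 ≤ R(B') ≤ Rs'/ζ, F' = ρ(R(B') − Rs')/(1−ζ), Topt(R(B'), Rs', F') ≤ Topt(R(B), Rs, F), and Vopt(R(B'), Rs', F') = 0. -/
/-!
Write `r = R(B)` and `x = Rs + (1-ζ)F/ρ`. In every case the new rate is
`R(B') = min r (min x (Rs/ζ))`, the new threshold is `Rs' = min r Rs`, and
`F' = ρ(R(B') - Rs')/(1-ζ)`, which puts `(R(B'), Rs', F')` on the balanced segment
`Rs' ≤ R(B') ≤ Rs'/ζ`. There `Topt = D / R(B')` and `Vopt = 0`, while case by case
`Topt(r, Rs, F) = D / min r (min x (Rs/ζ))` as well, so the latency is unchanged;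
`B' ≤ B` follows from `R(B') ≤ r` by monotonicity of `R`.
-/

noncomputable section

section Balanced

variable {D ρ ζ r Rs F : ℝ}

lemma div_sub_div_one_sub (hζ0 : ζ ≠ 0) (hζ1 : ζ ≠ 1) : (Rs / ζ - Rs) / (1 - ζ) = Rs / ζ := by
  have : 1 - ζ ≠ 0 := sub_ne_zero.2 hζ1.symm
  field_simp

lemma Topt_eq_div_of_balanced (hρ : ρ ≠ 0) (hζ0 : ζ ≠ 0) (hζ1 : ζ ≠ 1) (hRs : Rs ≤ r)
    (hr : r ≤ Rs / ζ) (hF : F = ρ * (r - Rs) / (1 - ζ)) : Topt D ρ ζ r Rs F = D / r := by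
  have hFρ : F / ρ = (r - Rs) / (1 - ζ) := by rw [hF]; field_simp
  rcases hr.lt_or_eq with hr | rfl
  · simp [Topt, not_lt.2 hRs, hr, hFρ]
  · simp [Topt, hFρ, div_sub_div_one_sub hζ0 hζ1, div_div_eq_mul_div, mul_comm]

lemma Vopt_eq_zero_of_balanced (hρ : ρ ≠ 0) (hζ0 : ζ ≠ 0) (hζ1 : ζ ≠ 1) (hRs : Rs ≤ r)
    (hr : r ≤ Rs / ζ) (hF : F = ρ * (r - Rs) / (1 - ζ)) : Vopt D ρ ζ r Rs F = 0 := by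
  have hFρ : F / ρ = (r - Rs) / (1 - ζ) := by rw [hF]; field_simp
  rcases hr.lt_or_eq with hr | rfl
  · simp [Vopt, not_lt.2 hRs, hr, hFρ]
  · simp [Vopt, hFρ, div_sub_div_one_sub hζ0 hζ1, mul_div_cancel₀ _ hζ0]

end Balanced

def reducedRate (ρ ζ r Rs F : ℝ) : ℝ := min r (min (Rs + (1 - ζ) * F / ρ) (Rs / ζ))

def reducedFlow (ρ ζ r Rs F : ℝ) : ℝ := ρ * (reducedRate ρ ζ r Rs F - min r Rs) / (1 - ζ)

section Reduction

variable {D ρ ζ r Rs F : ℝ}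

lemma add_mul_div_lt_iff (hζ1 : ζ < 1) (y : ℝ) :
    Rs + (1 - ζ) * F / ρ < y ↔ F / ρ < (y - Rs) / (1 - ζ) := by
  rw [lt_div_iff₀ (sub_pos.2 hζ1), mul_div_assoc]
  constructor <;> intro <;> linarith

lemma reducedRate_eq_ite (hρ : 0 < ρ) (hζ0 : 0 < ζ) (hζ1 : ζ < 1) (hRs : 0 ≤ Rs) (hF : 0 ≤ F) :
    reducedRate ρ ζ r Rs F =
      if r < Rs then r
      else if r < Rs / ζ then
        if F / ρ < (r - Rs) / (1 - ζ) then Rs + (1 - ζ) * F / ρ else r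
      else
        if F / ρ < Rs / ζ then Rs + (1 - ζ) * F / ρ else Rs / ζ := by
  have hx : Rs ≤ Rs + (1 - ζ) * F / ρ := le_add_of_nonneg_right (by bound)
  have hRsζ : Rs ≤ Rs / ζ := le_div_self hRs hζ0 hζ1.le
  have hcond : F / ρ < Rs / ζ ↔ Rs + (1 - ζ) * F / ρ < Rs / ζ := by
    rw [add_mul_div_lt_iff hζ1, div_sub_div_one_sub hζ0.ne' hζ1.ne]
  simp only [reducedRate, hcond, ← add_mul_div_lt_iff hζ1]
  split_ifs <;> simp only [min_def] <;> split_ifs <;> linarith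

lemma reducedFlow_eq_ite (hρ : 0 < ρ) (hζ0 : 0 < ζ) (hζ1 : ζ < 1) (hRs : 0 ≤ Rs) (hF : 0 ≤ F) :
    reducedFlow ρ ζ r Rs F =
      if r < Rs then 0
      else if r < Rs / ζ then
        if F / ρ < (r - Rs) / (1 - ζ) then F else ρ * (r - Rs) / (1 - ζ)
      else
        if F / ρ < Rs / ζ then F else ρ * Rs / ζ := by
  have : 1 - ζ ≠ 0 := (sub_pos.2 hζ1).ne'
  rw [reducedFlow, reducedRate_eq_ite hρ hζ0 hζ1 hRs hF, min_def_lt]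
  split_ifs
  · simp
  · field_simp; ring
  · rfl
  · field_simp; ring
  · rw [mul_div_assoc, div_sub_div_one_sub hζ0.ne' hζ1.ne, mul_div_assoc]

lemma Topt_eq_div_reducedRate (hρ : 0 < ρ) (hζ0 : 0 < ζ) (hζ1 : ζ < 1) (hRs : 0 ≤ Rs)
    (hF : 0 ≤ F) : Topt D ρ ζ r Rs F = D / reducedRate ρ ζ r Rs F := by
  have hlat : D * ρ / (F * (1 - ζ) + ρ * Rs) = D / (Rs + (1 - ζ) * F / ρ) := by
    field_simp; ring
  rw [Topt, reducedRate_eq_ite hρ hζ0 hζ1 hRs hF]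
  split_ifs
  all_goals first | rfl | exact hlat | rw [div_div_eq_mul_div, mul_comm]

lemma min_le_reducedRate (hρ : 0 < ρ) (hζ0 : 0 < ζ) (hζ1 : ζ ≤ 1) (hRs : 0 ≤ Rs) (hF : 0 ≤ F) :
    min r Rs ≤ reducedRate ρ ζ r Rs F :=
  le_min (min_le_left _ _) (le_min
    ((min_le_right _ _).trans (le_add_of_nonneg_right (by bound)))
    ((min_le_right _ _).trans (le_div_self hRs hζ0 hζ1)))

lemma reducedRate_le_min_div (hr : 0 ≤ r) (hζ0 : 0 < ζ) (hζ1 : ζ ≤ 1) :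
    reducedRate ρ ζ r Rs F ≤ min r Rs / ζ := by
  rw [← min_div_div_right hζ0.le]
  exact min_le_min (le_div_self hr hζ0 hζ1) (min_le_right _ _)

lemma reducedFlow_le (hρ : 0 < ρ) (hζ1 : ζ < 1) (hF : 0 ≤ F) : reducedFlow ρ ζ r Rs F ≤ F := by
  have hζ : 0 < 1 - ζ := sub_pos.2 hζ1
  have hx : reducedRate ρ ζ r Rs F ≤ Rs + (1 - ζ) * F / ρ :=
    (min_le_right _ _).trans (min_le_left _ _)
  have hr : reducedRate ρ ζ r Rs F ≤ r := min_le_left _ _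
  have hstep : reducedRate ρ ζ r Rs F - min r Rs ≤ (1 - ζ) * F / ρ := by
    rcases le_total r Rs with h | h
    · have : 0 ≤ (1 - ζ) * F / ρ := by positivity
      linarith [min_eq_left h]
    · linarith [min_eq_right h]
  rw [reducedFlow, div_le_iff₀ hζ]
  calc ρ * (reducedRate ρ ζ r Rs F - min r Rs) ≤ ρ * ((1 - ζ) * F / ρ) :=
        mul_le_mul_of_nonneg_left hstep hρ.le
    _ = F * (1 - ζ) := by field_simp

end Reduction

theorem reduction_to_balanced_region_general
    (D ρ ζ : ℝ) (hρ : 0 < ρ) (hζ : ζ ∈ Set.Ioo (0:ℝ) 1)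
    (R Rinv : ℝ → ℝ)
    (hmono : StrictMonoOn R (Set.Ici 0))
    (hinv_right : ∀ x, 0 ≤ x → R (Rinv x) = x)
    (hinv_nonneg : ∀ x, 0 ≤ x → 0 ≤ Rinv x)
    (B Rs F : ℝ) (hB : 0 ≤ B) (hRB : 0 < R B) (hRs : 0 < Rs) (hF : 0 ≤ F)
    (B' Rs' F' : ℝ)
    (hB' : B' =
      if R B < Rs then B
      else if R B < Rs / ζ then
        if F / ρ < (R B - Rs) / (1 - ζ) then Rinv (Rs + (1 - ζ) * F / ρ) else B
      else
        if F / ρ < Rs / ζ then Rinv (Rs + (1 - ζ) * F / ρ) else Rinv (Rs / ζ))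
    (hRs' : Rs' = if R B < Rs then R B else Rs)
    (hF' : F' =
      if R B < Rs then 0
      else if R B < Rs / ζ then
        if F / ρ < (R B - Rs) / (1 - ζ) then F else ρ * (R B - Rs) / (1 - ζ)
      else
        if F / ρ < Rs / ζ then F else ρ * Rs / ζ) :
    B' ≤ B ∧ Rs' ≤ Rs ∧ F' ≤ F ∧
    Rs' ≤ R B' ∧ R B' ≤ Rs' / ζ ∧
    F' = ρ * (R B' - Rs') / (1 - ζ) ∧
    Topt D ρ ζ (R B') Rs' F' ≤ Topt D ρ ζ (R B) Rs F ∧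
    Vopt D ρ ζ (R B') Rs' F' = 0 := by
  obtain ⟨hζ0, hζ1⟩ := hζ
  have hx : 0 ≤ Rs + (1 - ζ) * F / ρ := by bound
  have hRsζ : 0 ≤ Rs / ζ := by positivity
  have hRB' : R B' = reducedRate ρ ζ (R B) Rs F := by
    rw [reducedRate_eq_ite hρ hζ0 hζ1 hRs.le hF, hB']
    simp only [apply_ite R, hinv_right _ hx, hinv_right _ hRsζ]
  have hRs'min : Rs' = min (R B) Rs := hRs'.trans (min_def_lt _ _).symm
  have hF'flow : F' = ρ * (R B' - Rs') / (1 - ζ) := by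
    rw [hF', ← reducedFlow_eq_ite hρ hζ0 hζ1 hRs.le hF, reducedFlow, hRB', hRs'min]
  have hB'0 : 0 ≤ B' := by
    rw [hB']
    split_ifs <;> first | exact hB | exact hinv_nonneg _ hx | exact hinv_nonneg _ hRsζ
  have hlow : Rs' ≤ R B' := hRs'min ▸ hRB' ▸ min_le_reducedRate hρ hζ0 hζ1.le hRs.le hF
  have hup : R B' ≤ Rs' / ζ := hRs'min ▸ hRB' ▸ reducedRate_le_min_div hRB.le hζ0 hζ1.le
  refine ⟨(hmono.le_iff_le hB'0 hB).1 (hRB' ▸ min_le_left _ _), hRs'min ▸ min_le_right _ _,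
    ?_, hlow, hup, hF'flow, ?_, Vopt_eq_zero_of_balanced hρ.ne' hζ0.ne' hζ1.ne hlow hup hF'flow⟩
  · rw [hF'flow, hRB', hRs'min]
    exact reducedFlow_le hρ hζ1 hF
  · rw [Topt_eq_div_of_balanced hρ.ne' hζ0.ne' hζ1.ne hlow hup hF'flow,
      Topt_eq_div_reducedRate hρ hζ0 hζ1 hRs.le hF, hRB']

/-- The case-defined mapping `(B,Rs,F) ↦ (B',Rs',F')` is componentwise non-increasing,
lands in the region `Rs' ≤ R(B') ≤ Rs'/ζ`, `F' = ρ(R(B')−Rs')/(1−ζ)`, does not increase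
the optimized latency, and needs no storage. -/
theorem reduction_to_balanced_region
    (D ρ ζ : ℝ) (hD : 0 < D) (hρ : 0 < ρ) (hζ : ζ ∈ Set.Ioo (0:ℝ) 1)
    (R Rinv : ℝ → ℝ)
    (hmono : StrictMonoOn R (Set.Ici 0))
    (hcont : ContinuousOn R (Set.Ici 0))
    (hbij : Set.BijOn R (Set.Ici 0) (Set.Ici 0))
    (hinv_left : ∀ b, 0 ≤ b → Rinv (R b) = b)
    (hinv_right : ∀ x, 0 ≤ x → R (Rinv x) = x)
    (hinv_nonneg : ∀ x, 0 ≤ x → 0 ≤ Rinv x)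
    (B Rs F : ℝ) (hB : 0 ≤ B) (hRB : 0 < R B) (hRs : 0 < Rs) (hF : 0 ≤ F)
    (B' Rs' F' : ℝ)
    (hB' : B' =
      if R B < Rs then B
      else if R B < Rs / ζ then
        if F / ρ < (R B - Rs) / (1 - ζ) then Rinv (Rs + (1 - ζ) * F / ρ) else B
      else
        if F / ρ < Rs / ζ then Rinv (Rs + (1 - ζ) * F / ρ) else Rinv (Rs / ζ))
    (hRs' : Rs' = if R B < Rs then R B else Rs)
    (hF' : F' =
      if R B < Rs then 0
      else if R B < Rs / ζ then
        if F / ρ < (R B - Rs) / (1 - ζ) then F else ρ * (R B - Rs) / (1 - ζ)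
      else
        if F / ρ < Rs / ζ then F else ρ * Rs / ζ) :
    B' ≤ B ∧ Rs' ≤ Rs ∧ F' ≤ F ∧
    Rs' ≤ R B' ∧ R B' ≤ Rs' / ζ ∧
    F' = ρ * (R B' - Rs') / (1 - ζ) ∧
    Topt D ρ ζ (R B') Rs' F' ≤ Topt D ρ ζ (R B) Rs F ∧
    Vopt D ρ ζ (R B') Rs' F' = 0 :=
  reduction_to_balanced_region_general D ρ ζ hρ hζ R Rinv hmono hinv_right hinv_nonneg B Rs F hB hRB
    hRs hF B' Rs' F' hB' hRs' hF'
end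
end
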